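/- arXiv:1802.02722 — 9 statements merged into one kernel-verified Lean document; each statement's English description precedes it below -/
import Mathlib

section
/- Let X = [0,1] and define d(x,y) = (x − y)² for x,y ∈ [0,1]. Then: (1) d satisfies the 2-relaxed triangle inequality, i.e. d(x,y) ≤ 2(d(x,z) + d(z,y)) for all x,y,z ∈ [0,1]; and (2) for no s ≥ 1 does d satisfy the s-relaxed polygonal inequality; more precisely, for every s ≥ 1 there exist n ∈ ℕ and points x₀ = 0, x₁, …, x_{n−1}, xₙ = 1 in [0,1] (namely x_i = i/n with n > s) such that d(x₀,xₙ) > s(d(x₀,x₁) + d(x₁,x₂) + ⋯ + d(x_{n−1},xₙ)). -/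
/-- On `X = [0,1]`, `d(x,y) = (x−y)²` satisfies the 2-relaxed triangle inequality,
but for no `s ≥ 1` does it satisfy the `s`-relaxed polygonal inequality. -/
theorem sq_dist_two_relaxed_but_not_polygonal :
    (∀ x y z : ℝ, x ∈ Set.Icc (0:ℝ) 1 → y ∈ Set.Icc (0:ℝ) 1 → z ∈ Set.Icc (0:ℝ) 1 →
      (x - y) ^ 2 ≤ 2 * ((x - z) ^ 2 + (z - y) ^ 2)) ∧
    (∀ s : ℝ, 1 ≤ s → ∃ (n : ℕ) (x : ℕ → ℝ), 1 ≤ n ∧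
      (∀ i ≤ n, x i ∈ Set.Icc (0:ℝ) 1) ∧ x 0 = 0 ∧ x n = 1 ∧
      (x 0 - x n) ^ 2 > s * ∑ i ∈ Finset.range n, (x i - x (i + 1)) ^ 2) := by
  constructor
  · intro x y z _ _ _
    nlinarith [sq_nonneg (x + y - 2*z)]
  · intro s hs
    obtain ⟨n, hn⟩ := exists_nat_gt s
    have hn1 : 1 ≤ n := by
      by_contra h
      push_neg at h
      interval_cases n
      · simp at hn; linarith
    have hnpos : (0:ℝ) < n := by positivity
    refine ⟨n, fun i => (i : ℝ) / n, hn1, ?_, by simp, by field_simp, ?_⟩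
    · intro i hi
      constructor
      · positivity
      · rw [div_le_one hnpos]
        exact_mod_cast hi
    · have hsum : ∑ i ∈ Finset.range n, (((i:ℝ)) / n - ((i+1:ℕ) : ℝ) / n) ^ 2
          = 1 / n := by
        have : ∀ i ∈ Finset.range n, (((i:ℝ)) / n - ((i+1:ℕ) : ℝ) / n) ^ 2 = 1 / n^2 := by
          intro i _
          push_cast
          field_simp
          ring
        rw [Finset.sum_congr rfl this, Finset.sum_const, Finset.card_range]
        field_simp
        ring_nf
        rw [← mul_pow, mul_inv_cancel₀ (ne_of_gt hnpos), one_pow]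
      push_cast at hsum ⊢
      rw [hsum]
      have : s * (1 / n) < 1 := by
        rw [mul_one_div, div_lt_one hnpos]
        exact hn
      calc s * (1 / n) < 1 := this
        _ ≤ ((0:ℝ)/n - n/n)^2 := by
            rw [div_self (ne_of_gt hnpos)]
            norm_num
end

section
/- (Frink–Schroeder) Let X be a nonempty set and d : X × X → [0,∞) satisfy: (i) d(x,y) = 0 iff x = y, (ii) d(x,y) = d(y,x), and (iii') d(x,y) ≤ λ·max{d(x,z), d(y,z)} for all x,y,z ∈ X, for some 1 ≤ λ ≤ 2. Define ρ(x,y) = inf{ Σ_{i=1}^{n} d(x_{i−1},x_i) : n ∈ ℕ, x = x₀, x₁, …, xₙ = y is a chain in X }. Then ρ is a metric on X and (1/(2λ))·d(x,y) ≤ ρ(x,y) ≤ d(x,y) for all x,y ∈ X. -/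
/-!
The metric axioms for `ρ` and the bound `ρ ≤ d` are formal: chains can be reversed and
concatenated, and a single step is a chain. The content is the chain inequality
`d(x₀, xₙ) ≤ 2λ ∑ d(xᵢ, xᵢ₊₁)`.

Replace the step lengths by positive weights `eᵢ ≥ d(xᵢ, xᵢ₊₁)` with sum `σ` and give step `i`
the level `ℓᵢ ≥ 1` with `2^(ℓᵢ-1) eᵢ ≤ 2σ < 2^ℓᵢ eᵢ`. Then `∑ 2^(-ℓᵢ) ≤ 1/2`, which is enough
to assign to the steps, in their order, non-overlapping dyadic intervals of lengths `2^(-ℓᵢ)`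
in `[0, 1]`. The two halves of `[0, 1]` split the chain at some point `x_k`, and
`d(x₀, xₙ) ≤ λ max (d(x₀, x_k), d(x_k, xₙ))`; each half is a rescaled copy of the same
situation with all levels lowered by one. Recursively, `d(x₀, xₙ) ≤ λ^ℓᵢ d(xᵢ, xᵢ₊₁)` for
some `i`, and `λ^ℓᵢ eᵢ ≤ λ 2^(ℓᵢ-1) eᵢ ≤ 2λσ` because `λ ≤ 2`.
-/

open Finset

/-- Step `i ∈ [p, q)` of a chain occupies the dyadic interval `[a i, a i + 2^(-ℓ i)] ⊆ [0, 1]`,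
to the left of the interval of step `i + 1`. -/
structure DyadicPacking (ℓ : ℕ → ℕ) (a : ℕ → ℝ) (p q : ℕ) : Prop where
  grid : ∀ i ∈ Ico p q, ∃ m : ℤ, a i * 2 ^ ℓ i = m
  nonneg : ∀ i ∈ Ico p q, 0 ≤ a i
  add_le_one : ∀ i ∈ Ico p q, a i + (2 ^ ℓ i)⁻¹ ≤ 1
  add_le_succ : ∀ i ∈ Ico p q, i + 1 < q → a i + (2 ^ ℓ i)⁻¹ ≤ a (i + 1)

lemma add_inv_two_pow_le_of_lt {a b : ℝ} {ℓ : ℕ} (ha : ∃ m : ℤ, a * 2 ^ ℓ = m)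
    (hb : ∃ m : ℤ, b * 2 ^ ℓ = m) (hab : a < b) : a + (2 ^ ℓ)⁻¹ ≤ b := by
  obtain ⟨m, hm⟩ := ha
  obtain ⟨k, hk⟩ := hb
  have h2 : (0 : ℝ) < 2 ^ ℓ := by positivity
  have hmk : m < k := by
    have : (m : ℝ) < k := by rw [← hm, ← hk]; exact mul_lt_mul_of_pos_right hab h2
    exact_mod_cast this
  have hmk' : (m : ℝ) + 1 ≤ k := by exact_mod_cast hmk
  rwa [← mul_le_mul_iff_of_pos_right h2, add_mul, inv_mul_cancel₀ h2.ne', hm, hk]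

namespace DyadicPacking

variable {ℓ : ℕ → ℕ} {a : ℕ → ℝ} {p q : ℕ}

lemma mono {p' q' : ℕ} (h : DyadicPacking ℓ a p q) (hp : p ≤ p') (hq : q' ≤ q) :
    DyadicPacking ℓ a p' q' where
  grid i hi := h.grid i (Ico_subset_Ico hp hq hi)
  nonneg i hi := h.nonneg i (Ico_subset_Ico hp hq hi)
  add_le_one i hi := h.add_le_one i (Ico_subset_Ico hp hq hi)
  add_le_succ i hi hiq := h.add_le_succ i (Ico_subset_Ico hp hq hi) (by omega)

lemma monotoneOn (h : DyadicPacking ℓ a p q) : MonotoneOn a (Set.Ico p q) :=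
  monotoneOn_of_le_add_one Set.ordConnected_Ico fun i _ hi hi' =>
    le_trans (le_add_of_nonneg_right (by positivity))
      (h.add_le_succ i (by simpa using hi) (by simpa using hi'.2))

lemma level_pos (h : DyadicPacking ℓ a p q) (hpq : p + 2 ≤ q) {i : ℕ} (hi : i ∈ Ico p q) :
    0 < ℓ i := by
  refine Nat.pos_of_ne_zero fun hℓ => ?_
  have hai : a i = 0 := by
    have := h.add_le_one i hi
    rw [hℓ, pow_zero, inv_one] at this
    linarith [h.nonneg i hi]
  rw [mem_Ico] at hi
  rcases (show i + 1 < q ∨ p + 1 ≤ i by omega) with hiq | hpi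
  · have hnext := h.add_le_succ i (mem_Ico.2 hi) hiq
    rw [hℓ, pow_zero, inv_one, hai] at hnext
    have := h.add_le_one (i + 1) (mem_Ico.2 ⟨by omega, hiq⟩)
    linarith [inv_pos.2 (pow_pos two_pos (ℓ (i + 1)) : (0 : ℝ) < 2 ^ ℓ (i + 1))]
  · obtain ⟨j, rfl⟩ : ∃ j, i = j + 1 := ⟨i - 1, by omega⟩
    have hprev := h.add_le_succ j (mem_Ico.2 ⟨by omega, by omega⟩) hi.2
    rw [hai] at hprev
    linarith [h.nonneg j (mem_Ico.2 ⟨by omega, by omega⟩),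
      inv_pos.2 (pow_pos two_pos (ℓ j) : (0 : ℝ) < 2 ^ ℓ j)]

lemma exists_split (h : DyadicPacking ℓ a p q) (hpq : p ≤ q) (hℓ : ∀ i ∈ Ico p q, 0 < ℓ i) :
    ∃ k, p ≤ k ∧ k ≤ q ∧ (∀ i ∈ Ico p k, a i + (2 ^ ℓ i)⁻¹ ≤ 1 / 2) ∧
      ∀ i ∈ Ico k q, 1 / 2 ≤ a i := by
  classical
  have hex : ∃ k, p ≤ k ∧ (q ≤ k ∨ 1 / 2 ≤ a k) := ⟨q, hpq, .inl le_rfl⟩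
  obtain ⟨k, ⟨hpk, hk⟩, hmin⟩ : ∃ k, (p ≤ k ∧ (q ≤ k ∨ 1 / 2 ≤ a k)) ∧
      ∀ i < k, ¬(p ≤ i ∧ (q ≤ i ∨ 1 / 2 ≤ a i)) :=
    ⟨Nat.find hex, Nat.find_spec hex, fun i => Nat.find_min hex⟩
  have hkq : k ≤ q := not_lt.1 fun hqk => hmin q hqk ⟨hpq, .inl le_rfl⟩
  refine ⟨k, hpk, hkq, fun i hi => ?_, fun i hi => ?_⟩
  · rw [mem_Ico] at hi
    have hiq : i ∈ Ico p q := mem_Ico.2 ⟨hi.1, by omega⟩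
    have hai : a i < 1 / 2 := not_le.1 fun h' => hmin i hi.2 ⟨hi.1, .inr h'⟩
    refine add_inv_two_pow_le_of_lt (h.grid i hiq) ⟨2 ^ (ℓ i - 1), ?_⟩ hai
    push_cast
    rw [← mul_pow_sub_one (hℓ i hiq).ne' (2 : ℝ)]
    ring
  · rw [mem_Ico] at hi
    rcases hk with hk | hk
    · omega
    · exact hk.trans (h.monotoneOn ⟨hpk, by omega⟩ ⟨by omega, hi.2⟩ hi.1)

lemma lower_half (h : DyadicPacking ℓ a p q) (hℓ : ∀ i ∈ Ico p q, 0 < ℓ i)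
    (ha : ∀ i ∈ Ico p q, a i + (2 ^ ℓ i)⁻¹ ≤ 1 / 2) :
    DyadicPacking (fun i => ℓ i - 1) (fun i => 2 * a i) p q where
  grid i hi := by
    obtain ⟨m, hm⟩ := h.grid i hi
    exact ⟨m, by rw [← hm, ← mul_pow_sub_one (hℓ i hi).ne' (2 : ℝ)]; ring⟩
  nonneg i hi := by linarith [h.nonneg i hi]
  add_le_one i hi := by
    have := ha i hi
    rw [← mul_pow_sub_one (hℓ i hi).ne' (2 : ℝ), mul_inv] at this
    linarith
  add_le_succ i hi hiq := by
    have := h.add_le_succ i hi hiq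
    rw [← mul_pow_sub_one (hℓ i hi).ne' (2 : ℝ), mul_inv] at this
    linarith

lemma upper_half (h : DyadicPacking ℓ a p q) (hℓ : ∀ i ∈ Ico p q, 0 < ℓ i)
    (ha : ∀ i ∈ Ico p q, 1 / 2 ≤ a i) :
    DyadicPacking (fun i => ℓ i - 1) (fun i => 2 * a i - 1) p q where
  grid i hi := by
    obtain ⟨m, hm⟩ := h.grid i hi
    refine ⟨m - 2 ^ (ℓ i - 1), ?_⟩
    push_cast
    rw [← hm, ← mul_pow_sub_one (hℓ i hi).ne' (2 : ℝ)]
    ring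
  nonneg i hi := by linarith [ha i hi]
  add_le_one i hi := by
    have := h.add_le_one i hi
    rw [← mul_pow_sub_one (hℓ i hi).ne' (2 : ℝ), mul_inv] at this
    linarith
  add_le_succ i hi hiq := by
    have := h.add_le_succ i hi hiq
    rw [← mul_pow_sub_one (hℓ i hi).ne' (2 : ℝ), mul_inv] at this
    linarith

end DyadicPacking

theorem exists_dyadicPacking (ℓ : ℕ → ℕ) (n : ℕ)
    (hℓ : ∑ i ∈ range n, ((2 : ℝ) ^ ℓ i)⁻¹ ≤ 1 / 2) : ∃ a, DyadicPacking ℓ a 0 n := by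
  set W : ℕ → ℝ := fun i => ∑ t ∈ range i, ((2 : ℝ) ^ ℓ t)⁻¹
  have hW : ∀ i, 0 ≤ W i := fun i => sum_nonneg fun t _ => by positivity
  have hWsucc : ∀ i, W (i + 1) = W i + (2 ^ ℓ i)⁻¹ := fun i => sum_range_succ _ _
  have hWn : ∀ i < n, 2 * W (i + 1) ≤ 1 := fun i hi => by
    have : W (i + 1) ≤ W n := sum_le_sum_of_subset_of_nonneg (range_subset_range.2 hi)
      fun t _ _ => by positivity
    linarith
  -- `2 W i` rounded up to the grid of step `i`; the factor `2` absorbs the rounding gaps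
  set a : ℕ → ℝ := fun i => ⌈2 * W i * 2 ^ ℓ i⌉₊ / 2 ^ ℓ i
  have hpos : ∀ i, (0 : ℝ) < 2 ^ ℓ i := fun i => by positivity
  have ha_ge : ∀ i, 2 * W i ≤ a i := fun i =>
    (le_div_iff₀ (hpos i)).2 (Nat.le_ceil _)
  have ha_lt : ∀ i, a i + (2 ^ ℓ i)⁻¹ < 2 * W (i + 1) := fun i => by
    have h := Nat.ceil_lt_add_one (by have := hW i; positivity : 0 ≤ 2 * W i * 2 ^ ℓ i)
    have : a i < 2 * W i + (2 ^ ℓ i)⁻¹ := by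
      rw [div_lt_iff₀ (hpos i), add_mul, inv_mul_cancel₀ (hpos i).ne']
      exact h
    rw [hWsucc]
    linarith
  refine ⟨a, fun i _ => ⟨⌈2 * W i * 2 ^ ℓ i⌉₊, ?_⟩, fun i _ => ?_, fun i hi => ?_,
    fun i _ hi => ?_⟩
  · simp only [a, div_mul_cancel₀ _ (hpos i).ne', Int.cast_natCast]
  · linarith [ha_ge i, hW i]
  · linarith [ha_lt i, hWn i (mem_Ico.1 hi).2]
  · linarith [ha_lt i, ha_ge (i + 1)]

section Chain

variable {X : Type*} {d : X → X → ℝ} {lam : ℝ}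

lemma exists_dist_le_of_split (hsymm : ∀ x y, d x y = d y x)
    (htri : ∀ x y z, d x y ≤ lam * max (d x z) (d y z)) (c : ℕ → X) (f : ℕ → ℝ) {p k q : ℕ}
    (hpk : p ≤ k) (hkq : k ≤ q) (hl : ∃ i ∈ Ico p k, lam * d (c p) (c k) ≤ f i)
    (hu : ∃ i ∈ Ico k q, lam * d (c k) (c q) ≤ f i) :
    ∃ i ∈ Ico p q, d (c p) (c q) ≤ f i := by
  obtain ⟨i, hi, hle⟩ := hl
  obtain ⟨j, hj, hle'⟩ := hu
  have hsplit := htri (c p) (c q) (c k)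
  rw [hsymm (c q)] at hsplit
  rcases le_total (d (c p) (c k)) (d (c k) (c q)) with hmax | hmax
  · rw [max_eq_right hmax] at hsplit
    exact ⟨j, Ico_subset_Ico hpk le_rfl hj, hsplit.trans hle'⟩
  · rw [max_eq_left hmax] at hsplit
    exact ⟨i, Ico_subset_Ico le_rfl hkq hi, hsplit.trans hle⟩

theorem exists_dist_le_pow_mul_of_dyadicPacking (hlam : 1 ≤ lam) (hnn : ∀ x y, 0 ≤ d x y)
    (hsymm : ∀ x y, d x y = d y x) (htri : ∀ x y z, d x y ≤ lam * max (d x z) (d y z))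
    (c : ℕ → X) {ℓ : ℕ → ℕ} {a : ℕ → ℝ} {p q : ℕ} (hpq : p < q) (h : DyadicPacking ℓ a p q) :
    ∃ i ∈ Ico p q, d (c p) (c q) ≤ lam ^ ℓ i * d (c i) (c (i + 1)) := by
  obtain ⟨N, hN⟩ : ∃ N, ∑ i ∈ Ico p q, ℓ i = N := ⟨_, rfl⟩
  induction N using Nat.strong_induction_on generalizing ℓ a p q with
  | _ N ih =>
  rcases (show q = p + 1 ∨ p + 2 ≤ q by omega) with rfl | hpq2
  · exact ⟨p, by simp, le_mul_of_one_le_left (hnn _ _) (one_le_pow₀ hlam)⟩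
  have hℓ : ∀ i ∈ Ico p q, 0 < ℓ i := fun i hi => h.level_pos hpq2 hi
  have half : ∀ {a' : ℕ → ℝ} {p' q' : ℕ}, p ≤ p' → p' < q' → q' ≤ q →
      DyadicPacking (fun i => ℓ i - 1) a' p' q' →
      ∃ i ∈ Ico p' q', lam * d (c p') (c q') ≤ lam ^ ℓ i * d (c i) (c (i + 1)) := by
    intro a' p' q' hp hpq' hq h'
    have hsub : Ico p' q' ⊆ Ico p q := Ico_subset_Ico hp hq
    have hlt : ∑ i ∈ Ico p' q', (ℓ i - 1) < N := by
      calc ∑ i ∈ Ico p' q', (ℓ i - 1) < ∑ i ∈ Ico p' q', ℓ i :=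
            sum_lt_sum_of_nonempty (nonempty_Ico.2 hpq') fun i hi => by
              have := hℓ i (hsub hi); omega
        _ ≤ N := hN ▸ sum_le_sum_of_subset hsub
    obtain ⟨i, hi, hle⟩ := ih _ hlt hpq' h' rfl
    refine ⟨i, hi, ?_⟩
    rw [← mul_pow_sub_one (hℓ i (hsub hi)).ne' lam, mul_assoc]
    exact mul_le_mul_of_nonneg_left hle (by linarith)
  obtain ⟨k, hpk, hkq, hlower, hupper⟩ := h.exists_split hpq.le hℓ
  have hlam_mul : ∀ x y, d x y ≤ lam * d x y := fun x y => le_mul_of_one_le_left (hnn x y) hlam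
  rcases hpk.eq_or_lt with rfl | hpk
  · obtain ⟨i, hi, hle⟩ := half le_rfl hpq le_rfl (h.upper_half hℓ hupper)
    exact ⟨i, hi, (hlam_mul _ _).trans hle⟩
  rcases hkq.eq_or_lt with rfl | hkq
  · obtain ⟨i, hi, hle⟩ := half le_rfl hpq le_rfl (h.lower_half hℓ hlower)
    exact ⟨i, hi, (hlam_mul _ _).trans hle⟩
  have hℓl : ∀ i ∈ Ico p k, 0 < ℓ i := fun i hi => hℓ i (Ico_subset_Ico le_rfl hkq.le hi)
  have hℓu : ∀ i ∈ Ico k q, 0 < ℓ i := fun i hi => hℓ i (Ico_subset_Ico hpk.le le_rfl hi)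
  exact exists_dist_le_of_split hsymm htri c _ hpk.le hkq.le
    (half le_rfl hpk hkq.le ((h.mono le_rfl hkq.le).lower_half hℓl hlower))
    (half hpk.le hkq le_rfl ((h.mono hpk.le le_rfl).upper_half hℓu hupper))

theorem dist_le_two_mul_sum_of_le_weights (hlam1 : 1 ≤ lam) (hlam2 : lam ≤ 2)
    (hnn : ∀ x y, 0 ≤ d x y) (hsymm : ∀ x y, d x y = d y x)
    (htri : ∀ x y z, d x y ≤ lam * max (d x z) (d y z)) (c : ℕ → X) {n : ℕ} (hn : 0 < n)
    {e : ℕ → ℝ} (he : ∀ i ∈ range n, 0 < e i) (hde : ∀ i ∈ range n, d (c i) (c (i + 1)) ≤ e i) :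
    d (c 0) (c n) ≤ 2 * lam * ∑ i ∈ range n, e i := by
  set σ := ∑ i ∈ range n, e i
  have hσ : 0 < σ := sum_pos he (nonempty_range_iff.2 hn.ne')
  have hlevel : ∀ i ∈ range n, ∃ k : ℕ, (2 : ℝ) ^ k ≤ 2 * σ / e i ∧ 2 * σ / e i < 2 ^ (k + 1) :=
    fun i hi => exists_nat_pow_near
      ((one_le_div (he i hi)).2 (by linarith [single_le_sum (fun t ht => (he t ht).le) hi]))
      one_lt_two
  choose! k hk using hlevel
  have hkraft : ∑ i ∈ range n, ((2 : ℝ) ^ (k i + 1))⁻¹ ≤ 1 / 2 :=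
    calc ∑ i ∈ range n, ((2 : ℝ) ^ (k i + 1))⁻¹ ≤ ∑ i ∈ range n, e i / (2 * σ) :=
          sum_le_sum fun i hi => by
            have := he i hi
            simpa only [inv_div] using inv_anti₀ (by positivity) (hk i hi).2.le
      _ = 1 / 2 := by
          rw [← sum_div]
          change σ / (2 * σ) = 1 / 2
          field_simp
  obtain ⟨a, ha⟩ := exists_dyadicPacking _ n hkraft
  obtain ⟨i, hi, hle⟩ := exists_dist_le_pow_mul_of_dyadicPacking hlam1 hnn hsymm htri c hn ha
  rw [← range_eq_Ico] at hi
  have h2k : (2 : ℝ) ^ k i * e i ≤ 2 * σ := (le_div_iff₀ (he i hi)).1 (hk i hi).1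
  calc d (c 0) (c n) ≤ lam ^ (k i + 1) * d (c i) (c (i + 1)) := hle
    _ ≤ lam ^ (k i + 1) * e i := mul_le_mul_of_nonneg_left (hde i hi) (by positivity)
    _ = lam * (lam ^ k i * e i) := by ring
    _ ≤ lam * (2 ^ k i * e i) := by
          have := he i hi
          gcongr
    _ ≤ lam * (2 * σ) := by gcongr
    _ = 2 * lam * σ := by ring

theorem dist_le_two_mul_sum (hlam1 : 1 ≤ lam) (hlam2 : lam ≤ 2)
    (hnn : ∀ x y, 0 ≤ d x y) (hsymm : ∀ x y, d x y = d y x)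
    (htri : ∀ x y z, d x y ≤ lam * max (d x z) (d y z)) (c : ℕ → X) {n : ℕ} (hn : 0 < n) :
    d (c 0) (c n) ≤ 2 * lam * ∑ i ∈ range n, d (c i) (c (i + 1)) := by
  refine le_of_forall_pos_le_add fun ε hε => ?_
  have hδ : 0 < ε / (2 * lam * n) := by
    have : (0 : ℝ) < n := by exact_mod_cast hn
    positivity
  calc d (c 0) (c n)
      ≤ 2 * lam * ∑ i ∈ range n, (d (c i) (c (i + 1)) + ε / (2 * lam * n)) :=
        dist_le_two_mul_sum_of_le_weights hlam1 hlam2 hnn hsymm htri c hn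
          (fun i _ => by linarith [hnn (c i) (c (i + 1))]) fun i _ => by linarith
    _ = 2 * lam * ∑ i ∈ range n, d (c i) (c (i + 1)) + ε := by
        have : (n : ℝ) ≠ 0 := by exact_mod_cast hn.ne'
        rw [sum_add_distrib, sum_const, card_range, nsmul_eq_mul]
        field_simp

def chainLengths (d : X → X → ℝ) (x y : X) : Set ℝ :=
  {t | ∃ (n : ℕ) (c : ℕ → X), 1 ≤ n ∧ c 0 = x ∧ c n = y ∧
    t = ∑ i ∈ range n, d (c i) (c (i + 1))}

lemma dist_mem_chainLengths (x y : X) : d x y ∈ chainLengths d x y :=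
  ⟨1, fun i => if i = 0 then x else y, le_rfl, rfl, rfl, by simp⟩

lemma nonneg_of_mem_chainLengths (hnn : ∀ x y, 0 ≤ d x y) {x y : X} {t : ℝ}
    (ht : t ∈ chainLengths d x y) : 0 ≤ t := by
  obtain ⟨n, c, -, -, -, rfl⟩ := ht
  exact sum_nonneg fun i _ => hnn _ _

lemma mem_chainLengths_symm (hsymm : ∀ x y, d x y = d y x) {x y : X} {t : ℝ}
    (ht : t ∈ chainLengths d x y) : t ∈ chainLengths d y x := by
  obtain ⟨n, c, hn, rfl, rfl, rfl⟩ := ht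
  refine ⟨n, fun i => c (n - i), hn, by simp, by simp, ?_⟩
  rw [← sum_range_reflect]
  refine sum_congr rfl fun i hi => ?_
  have hi := mem_range.1 hi
  dsimp only
  rw [hsymm, show n - 1 - i + 1 = n - i by omega, show n - (i + 1) = n - 1 - i by omega]

lemma add_mem_chainLengths {x y z : X} {s t : ℝ} (hs : s ∈ chainLengths d x z)
    (ht : t ∈ chainLengths d z y) : s + t ∈ chainLengths d x y := by
  obtain ⟨m, c₁, hm, rfl, rfl, rfl⟩ := hs
  obtain ⟨n, c₂, hn, hc₂0, rfl, rfl⟩ := ht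
  set c : ℕ → X := fun i => if i ≤ m then c₁ i else c₂ (i - m)
  have hc₁ : ∀ i ≤ m, c i = c₁ i := fun i hi => if_pos hi
  have hc₂ : ∀ i, c (m + i) = c₂ i := by
    rintro (_ | i)
    · simp [c, hc₂0]
    · simp [c]
  refine ⟨m + n, c, by omega, hc₁ 0 (by omega), hc₂ n, ?_⟩
  rw [sum_range_add]
  congr 1
  · exact sum_congr rfl fun i hi => by
      rw [hc₁ i (by simp at hi; omega), hc₁ (i + 1) (by simp at hi; omega)]
  · exact sum_congr rfl fun i _ => by rw [add_assoc, hc₂, hc₂]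

lemma dist_le_of_mem_chainLengths (hlam1 : 1 ≤ lam) (hlam2 : lam ≤ 2)
    (hnn : ∀ x y, 0 ≤ d x y) (hsymm : ∀ x y, d x y = d y x)
    (htri : ∀ x y z, d x y ≤ lam * max (d x z) (d y z)) {x y : X} {t : ℝ}
    (ht : t ∈ chainLengths d x y) : d x y ≤ 2 * lam * t := by
  obtain ⟨n, c, hn, rfl, rfl, rfl⟩ := ht
  exact dist_le_two_mul_sum hlam1 hlam2 hnn hsymm htri c hn

noncomputable def chainDist (d : X → X → ℝ) (x y : X) : ℝ := sInf (chainLengths d x y)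

lemma bddBelow_chainLengths (hnn : ∀ x y, 0 ≤ d x y) (x y : X) :
    BddBelow (chainLengths d x y) :=
  ⟨0, fun _ => nonneg_of_mem_chainLengths hnn⟩

lemma chainDist_nonneg (hnn : ∀ x y, 0 ≤ d x y) (x y : X) : 0 ≤ chainDist d x y :=
  le_csInf ⟨_, dist_mem_chainLengths x y⟩ fun _ => nonneg_of_mem_chainLengths hnn

lemma chainDist_le (hnn : ∀ x y, 0 ≤ d x y) (x y : X) : chainDist d x y ≤ d x y :=
  csInf_le (bddBelow_chainLengths hnn x y) (dist_mem_chainLengths x y)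

lemma chainDist_comm (hsymm : ∀ x y, d x y = d y x) (x y : X) :
    chainDist d x y = chainDist d y x := by
  unfold chainDist
  congr 1
  exact Set.Subset.antisymm (fun _ => mem_chainLengths_symm hsymm)
    (fun _ => mem_chainLengths_symm hsymm)

lemma chainDist_le_add (hnn : ∀ x y, 0 ≤ d x y) (x y z : X) :
    chainDist d x y ≤ chainDist d x z + chainDist d z y := by
  unfold chainDist
  rw [← csInf_add ⟨_, dist_mem_chainLengths x z⟩ (bddBelow_chainLengths hnn x z)
    ⟨_, dist_mem_chainLengths z y⟩ (bddBelow_chainLengths hnn z y)]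
  refine csInf_le_csInf (bddBelow_chainLengths hnn x y)
    (Set.add_nonempty.2 ⟨⟨_, dist_mem_chainLengths x z⟩, ⟨_, dist_mem_chainLengths z y⟩⟩) ?_
  rintro _ ⟨s, hs, t, ht, rfl⟩
  exact add_mem_chainLengths hs ht

lemma le_chainDist (hlam1 : 1 ≤ lam) (hlam2 : lam ≤ 2)
    (hnn : ∀ x y, 0 ≤ d x y) (hsymm : ∀ x y, d x y = d y x)
    (htri : ∀ x y z, d x y ≤ lam * max (d x z) (d y z)) (x y : X) :
    1 / (2 * lam) * d x y ≤ chainDist d x y :=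
  le_csInf ⟨_, dist_mem_chainLengths x y⟩ fun t ht => by
    rw [one_div_mul_eq_div, div_le_iff₀' (by linarith)]
    exact dist_le_of_mem_chainLengths hlam1 hlam2 hnn hsymm htri ht

end Chain

theorem frink_schroeder_general {X : Type*}
    (d : X → X → ℝ) (lam : ℝ) (hlam1 : 1 ≤ lam) (hlam2 : lam ≤ 2)
    (hnonneg : ∀ x y, 0 ≤ d x y)
    (heq : ∀ x y, d x y = 0 ↔ x = y)
    (hsymm : ∀ x y, d x y = d y x)
    (htri : ∀ x y z, d x y ≤ lam * max (d x z) (d y z))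
    (ρ : X → X → ℝ)
    (hρ : ∀ x y, ρ x y = sInf {t : ℝ | ∃ (n : ℕ) (c : ℕ → X),
      1 ≤ n ∧ c 0 = x ∧ c n = y ∧ t = ∑ i ∈ Finset.range n, d (c i) (c (i + 1))}) :
    (∀ x y, 0 ≤ ρ x y) ∧
    (∀ x y, ρ x y = 0 ↔ x = y) ∧
    (∀ x y, ρ x y = ρ y x) ∧
    (∀ x y z, ρ x y ≤ ρ x z + ρ z y) ∧
    (∀ x y, (1 / (2 * lam)) * d x y ≤ ρ x y ∧ ρ x y ≤ d x y) := by
  obtain rfl : ρ = chainDist d := funext fun x => funext (hρ x)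
  have hlower := le_chainDist hlam1 hlam2 hnonneg hsymm htri
  refine ⟨chainDist_nonneg hnonneg, fun x y => ⟨fun h => (heq x y).1 ?_, ?_⟩,
    chainDist_comm hsymm, chainDist_le_add hnonneg,
    fun x y => ⟨hlower x y, chainDist_le hnonneg x y⟩⟩
  · have hxy := hlower x y
    rw [h] at hxy
    exact le_antisymm (nonpos_of_mul_nonpos_right hxy (by positivity)) (hnonneg x y)
  · rintro rfl
    exact le_antisymm ((chainDist_le hnonneg x x).trans_eq ((heq x x).2 rfl))
      (chainDist_nonneg hnonneg x x)

/-- **Frink–Schroeder metrization.** If `d` satisfies (i) `d(x,y)=0 ↔ x=y`,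
(ii) symmetry, and (iii') `d(x,y) ≤ λ·max{d(x,z), d(y,z)}` for some `1 ≤ λ ≤ 2`,
then the chain function `ρ` is a metric with `(1/(2λ))·d ≤ ρ ≤ d`. -/
theorem frink_schroeder {X : Type*} [Nonempty X]
    (d : X → X → ℝ) (lam : ℝ) (hlam1 : 1 ≤ lam) (hlam2 : lam ≤ 2)
    (hnonneg : ∀ x y, 0 ≤ d x y)
    (heq : ∀ x y, d x y = 0 ↔ x = y)
    (hsymm : ∀ x y, d x y = d y x)
    (htri : ∀ x y z, d x y ≤ lam * max (d x z) (d y z))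
    (ρ : X → X → ℝ)
    (hρ : ∀ x y, ρ x y = sInf {t : ℝ | ∃ (n : ℕ) (c : ℕ → X),
      1 ≤ n ∧ c 0 = x ∧ c n = y ∧ t = ∑ i ∈ Finset.range n, d (c i) (c (i + 1))}) :
    (∀ x y, 0 ≤ ρ x y) ∧
    (∀ x y, ρ x y = 0 ↔ x = y) ∧
    (∀ x y, ρ x y = ρ y x) ∧
    (∀ x y z, ρ x y ≤ ρ x z + ρ z y) ∧
    (∀ x y, (1 / (2 * lam)) * d x y ≤ ρ x y ∧ ρ x y ≤ d x y) :=
  frink_schroeder_general d lam hlam1 hlam2 hnonneg heq hsymm htri ρ hρ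
end

section
/- (Stempak, ultrametric-type case) Let X be a nonempty set and d : X × X → [0,∞) satisfy: (i) d(x,y) = 0 iff x = y, (ii) d(x,y) = d(y,x), and (iii') d(x,y) ≤ λ·max{d(x,z), d(y,z)} for all x,y,z ∈ X, for some λ ≥ 2. Let p ∈ (0,1] be determined by λ^p = 2 and define ρ_p(x,y) = inf{ Σ_{i=1}^{n} d(x_{i−1},x_i)^p : n ∈ ℕ, x = x₀, x₁, …, xₙ = y is a chain in X }. Then ρ_p is a metric on X and ρ_p(x,y) ≤ d(x,y)^p ≤ 4·ρ_p(x,y) for all x,y ∈ X. -/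
theorem frink_chain_aux {X : Type*} (D : X → X → ℝ) (hnn : ∀ x y, 0 ≤ D x y)
    (hkey : ∀ x y z, D x y ≤ 2 * max (D x z) (D z y)) :
    ∀ n : ℕ, ∀ c : ℕ → X, 1 ≤ n →
      D (c 0) (c n) ≤ max (D (c 0) (c 1))
        (4 * ∑ i ∈ Finset.range n, D (c i) (c (i + 1))
          - 2 * D (c 0) (c 1) - 2 * D (c (n - 1)) (c n)) := by
  intro n
  induction n using Nat.strong_induction_on with
  | _ n ih =>
  intro c hn
  rcases eq_or_lt_of_le hn with h1 | h2
  · rw [← h1]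
    simp
  -- now 2 ≤ n
  classical
  set w : ℕ → ℝ := fun i => D (c i) (c (i + 1)) with hw
  have hwnn : ∀ i, 0 ≤ w i := fun i => hnn _ _
  set S := ∑ i ∈ Finset.range n, w i with hS
  have hSnn : 0 ≤ S := Finset.sum_nonneg fun i _ => hwnn i
  have hpairS : w 0 + w (n - 1) ≤ S := by
    have hsub : ({0, n - 1} : Finset ℕ) ⊆ Finset.range n := by
      intro i hi
      simp only [Finset.mem_insert, Finset.mem_singleton] at hi
      rcases hi with h | h <;> simp [Finset.mem_range] <;> omega
    calc w 0 + w (n - 1) = ∑ i ∈ ({0, n - 1} : Finset ℕ), w i := by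
          rw [Finset.sum_pair (by omega : (0 : ℕ) ≠ n - 1)]
      _ ≤ S := Finset.sum_le_sum_of_subset_of_nonneg hsub fun i _ _ => hwnn i
  set T := 2 * S - w 0 - w (n - 1) with hT
  have hT0 : 0 ≤ T := by
    have := hwnn 0; have := hwnn (n - 1); simp only [hT]; linarith
  have hwk_le_S : ∀ k, k < n → w k ≤ S :=
    fun k hk => Finset.single_le_sum (fun i _ => hwnn i) (Finset.mem_range.2 hk)
  set f : ℕ → ℝ := fun k => 4 * ∑ i ∈ Finset.range k, w i - 2 * w 0 - 2 * w (k - 1) with hf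
  set g : ℕ → ℝ := fun k => 4 * ∑ i ∈ Finset.range (n - k), w (k + i) - 2 * w k - 2 * w (n - 1)
    with hg
  have hsplit : ∀ k, 1 ≤ k → k ≤ n - 1 →
      ∑ i ∈ Finset.range (k + 1), w i + ∑ i ∈ Finset.range (n - k), w (k + i) = S + w k := by
    intro k _ hk
    have h1 : ∑ i ∈ Finset.range (k + (n - k)), w i
        = ∑ i ∈ Finset.range k, w i + ∑ i ∈ Finset.range (n - k), w (k + i) :=
      Finset.sum_range_add w k (n - k)
    have h2 : k + (n - k) = n := by omega
    rw [h2] at h1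
    rw [Finset.sum_range_succ]
    linarith
  -- find a good split point
  have hexists : ∃ k, 1 ≤ k ∧ k ≤ n - 1 ∧ f k ≤ T ∧ g k ≤ T := by
    set P : ℕ → Prop := fun m => 1 ≤ m ∧ f m ≤ T with hP
    have hP1 : P 1 := by
      refine ⟨le_refl 1, ?_⟩
      simp only [hf, Finset.sum_range_one]
      have := hwnn 0
      simp only [Nat.sub_self]
      linarith
    set k := Nat.findGreatest P (n - 1) with hkdef
    have hk_spec : P k := Nat.findGreatest_spec (by omega : 1 ≤ n - 1) hP1
    have hk_le : k ≤ n - 1 := Nat.findGreatest_le _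
    by_cases hgk : g k ≤ T
    · exact ⟨k, hk_spec.1, hk_le, hk_spec.2, hgk⟩
    · exfalso
      have hkn : k < n - 1 := by
        rcases lt_or_eq_of_le hk_le with h | h
        · exact h
        · exfalso
          apply hgk
          have h2 : n - (n - 1) = 1 := by omega
          have h3 : (n - 1) + 0 = n - 1 := by omega
          simp only [hg, h, h2, Finset.sum_range_one, h3]
          linarith
      have hnotP : ¬ P (k + 1) :=
        Nat.findGreatest_is_greatest (Nat.lt_succ_self k) (by omega)
      have hfk1 : T < f (k + 1) := by
        by_contra hcon
        exact hnotP ⟨by omega, not_lt.1 hcon⟩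
      have hgk' : T < g k := not_le.1 hgk
      have hid := hsplit k hk_spec.1 hk_le
      have e1 : (k + 1) - 1 = k := by omega
      have hfeval : f (k + 1) = 4 * ∑ i ∈ Finset.range (k + 1), w i - 2 * w 0 - 2 * w k := by
        simp only [hf, e1]
      simp only [hfeval, hg] at hfk1 hgk'
      simp only [hT] at hfk1 hgk'
      linarith
  obtain ⟨k, hk1, hkn1, hfk, hgk⟩ := hexists
  -- left piece
  have hL : D (c 0) (c k) ≤ T := by
    have hIH := ih k (by omega) c hk1
    have e1 : k - 1 + 1 = k := by omega
    have hw0T : w 0 ≤ T := by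
      have := hwnn (n - 1); have := hwk_le_S 0 (by omega)
      simp only [hT]; linarith
    refine le_trans hIH (max_le hw0T ?_)
    have : D (c (k - 1)) (c k) = w (k - 1) := by
      simp only [hw]; rw [e1]
    rw [this]
    exact hfk
  -- right piece
  have hR : D (c k) (c n) ≤ T := by
    have hIH := ih (n - k) (by omega) (fun i => c (k + i)) (by omega)
    have e1 : k + (n - k) = n := by omega
    have e2 : k + (n - k - 1) = n - 1 := by omega
    have e3 : k + 0 = k := by omega
    rw [e1, e3] at hIH
    have hwkT : w k ≤ T := by
      have := hwk_le_S k (by omega)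
      simp only [hT]; linarith
    refine le_trans hIH (max_le ?_ ?_)
    · exact le_trans (le_of_eq rfl) hwkT
    · -- identify the sum with g k and the last edge
      have hsum : ∑ i ∈ Finset.range (n - k), D (c (k + i)) (c (k + (i + 1)))
          = ∑ i ∈ Finset.range (n - k), w (k + i) := by
        refine Finset.sum_congr rfl fun i _ => ?_
        have : k + (i + 1) = (k + i) + 1 := by omega
        rw [this]
      have hlast : D (c (k + (n - k - 1))) (c n) = w (n - 1) := by
        rw [e2]
        simp only [hw]
        rw [show n - 1 + 1 = n from by omega]
      have hck1 : D (c k) (c (k + 1)) = w k := rfl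
      rw [hsum, hlast, hck1]
      exact hgk
  -- combine
  have hcomb := hkey (c 0) (c n) (c k)
  have h2T : D (c 0) (c n) ≤ 2 * T :=
    le_trans hcomb (mul_le_mul_of_nonneg_left (max_le hL hR) (by norm_num))
  refine le_trans h2T (le_max_of_le_right ?_)
  have hsum_eq : ∑ i ∈ Finset.range n, D (c i) (c (i + 1)) = S := by
    simp only [hS, hw]
  have hlastn : D (c (n - 1)) (c n) = w (n - 1) := by
    simp only [hw]
    rw [show n - 1 + 1 = n from by omega]
  have hw0 : D (c 0) (c 1) = w 0 := rfl
  rw [hlastn, hw0]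
  simp only [hT]
  linarith

theorem frink_chain {X : Type*} (D : X → X → ℝ) (hnn : ∀ x y, 0 ≤ D x y)
    (hkey : ∀ x y z, D x y ≤ 2 * max (D x z) (D z y)) (n : ℕ) (c : ℕ → X) (hn : 1 ≤ n) :
    D (c 0) (c n) ≤ 4 * ∑ i ∈ Finset.range n, D (c i) (c (i + 1)) := by
  have h := frink_chain_aux D hnn hkey n c hn
  have hsum_nn : 0 ≤ ∑ i ∈ Finset.range n, D (c i) (c (i + 1)) :=
    Finset.sum_nonneg fun i _ => hnn _ _
  have h0 : D (c 0) (c 1) ≤ ∑ i ∈ Finset.range n, D (c i) (c (i + 1)) :=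
    Finset.single_le_sum (f := fun i => D (c i) (c (i + 1))) (fun i _ => hnn _ _)
      (Finset.mem_range.2 (show 0 < n by omega))
  have h1 := hnn (c 0) (c 1)
  have h2 := hnn (c (n - 1)) (c n)
  refine le_trans h (max_le (by linarith) (by linarith))

/-- **Stempak's metrization theorem, ultrametric-type case.** If `d` satisfies
(i), (ii) and `d(x,y) ≤ λ·max{d(x,z), d(y,z)}` for some `λ ≥ 2`, and `p ∈ (0,1]`
satisfies `λ^p = 2`, then the chain function `ρ_p` built from `d^p` is a metric
with `ρ_p ≤ d^p ≤ 4·ρ_p`. -/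
theorem stempak_metrization_ultra {X : Type*} [Nonempty X]
    (d : X → X → ℝ) (lam : ℝ) (hlam : 2 ≤ lam)
    (hnonneg : ∀ x y, 0 ≤ d x y)
    (heq : ∀ x y, d x y = 0 ↔ x = y)
    (hsymm : ∀ x y, d x y = d y x)
    (htri : ∀ x y z, d x y ≤ lam * max (d x z) (d y z))
    (p : ℝ) (hp0 : 0 < p) (hp1 : p ≤ 1) (hp : lam ^ p = 2)
    (ρ : X → X → ℝ)
    (hρ : ∀ x y, ρ x y = sInf {t : ℝ | ∃ (n : ℕ) (c : ℕ → X),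
      1 ≤ n ∧ c 0 = x ∧ c n = y ∧ t = ∑ i ∈ Finset.range n, d (c i) (c (i + 1)) ^ p}) :
    (∀ x y, 0 ≤ ρ x y) ∧
    (∀ x y, ρ x y = 0 ↔ x = y) ∧
    (∀ x y, ρ x y = ρ y x) ∧
    (∀ x y z, ρ x y ≤ ρ x z + ρ z y) ∧
    (∀ x y, ρ x y ≤ d x y ^ p ∧ d x y ^ p ≤ 4 * ρ x y) := by
  have hlam0 : (0 : ℝ) ≤ lam := le_trans (by norm_num) hlam
  have hDnn : ∀ x y : X, 0 ≤ d x y ^ p := fun x y => Real.rpow_nonneg (hnonneg x y) p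
  have hkey : ∀ x y z : X, d x y ^ p ≤ 2 * max (d x z ^ p) (d z y ^ p) := by
    intro x y z
    have h2 := Real.rpow_le_rpow (hnonneg x y) (htri x y z) hp0.le
    have hmax_nn : 0 ≤ max (d x z) (d y z) := le_max_of_le_left (hnonneg x z)
    rw [Real.mul_rpow hlam0 hmax_nn, hp] at h2
    have h4 : (max (d x z) (d y z)) ^ p = max (d x z ^ p) (d z y ^ p) := by
      rw [hsymm z y]
      rcases le_total (d x z) (d y z) with h | h
      · rw [max_eq_right h, max_eq_right (Real.rpow_le_rpow (hnonneg x z) h hp0.le)]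
      · rw [max_eq_left h, max_eq_left (Real.rpow_le_rpow (hnonneg y z) h hp0.le)]
    rwa [h4] at h2
  have hchain := frink_chain (fun x y => d x y ^ p) hDnn hkey
  have hmem : ∀ x y : X, (d x y ^ p) ∈ {t : ℝ | ∃ (n : ℕ) (c : ℕ → X),
      1 ≤ n ∧ c 0 = x ∧ c n = y ∧ t = ∑ i ∈ Finset.range n, d (c i) (c (i + 1)) ^ p} := by
    intro x y
    exact ⟨1, fun i => if i = 0 then x else y, le_refl 1, by simp, by simp, by simp⟩
  have hlb : ∀ x y : X, ∀ t ∈ {t : ℝ | ∃ (n : ℕ) (c : ℕ → X),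
      1 ≤ n ∧ c 0 = x ∧ c n = y ∧ t = ∑ i ∈ Finset.range n, d (c i) (c (i + 1)) ^ p},
      d x y ^ p / 4 ≤ t := by
    rintro x y t ⟨n, c, hn, h0, h1, rfl⟩
    have h := hchain n c hn
    rw [h0, h1] at h
    linarith
  have hρ_le : ∀ x y : X, ρ x y ≤ d x y ^ p := by
    intro x y
    rw [hρ]
    exact csInf_le ⟨_, hlb x y⟩ (hmem x y)
  have hρ_ge : ∀ x y : X, d x y ^ p / 4 ≤ ρ x y := by
    intro x y
    rw [hρ]
    exact le_csInf ⟨_, hmem x y⟩ (hlb x y)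
  have hnneg : ∀ x y : X, 0 ≤ ρ x y := by
    intro x y
    have := hρ_ge x y
    have := hDnn x y
    linarith
  refine ⟨hnneg, ?_, ?_, ?_, fun x y => ⟨hρ_le x y, by have := hρ_ge x y; linarith⟩⟩
  · -- ρ = 0 ↔ eq
    intro x y
    constructor
    · intro h
      have h1 := hρ_ge x y
      rw [h] at h1
      have h2 : d x y ^ p = 0 := le_antisymm (by linarith) (hDnn x y)
      have h3 : d x y = 0 := ((Real.rpow_eq_zero_iff_of_nonneg (hnonneg x y)).1 h2).1
      exact (heq x y).1 h3
    · rintro rfl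
      refine le_antisymm ?_ (hnneg x x)
      have h := hρ_le x x
      rwa [(heq x x).mpr rfl, Real.zero_rpow hp0.ne'] at h
  · -- symmetry
    have hsub : ∀ x y : X, ∀ t ∈ {t : ℝ | ∃ (n : ℕ) (c : ℕ → X),
        1 ≤ n ∧ c 0 = x ∧ c n = y ∧ t = ∑ i ∈ Finset.range n, d (c i) (c (i + 1)) ^ p},
        t ∈ {t : ℝ | ∃ (n : ℕ) (c : ℕ → X),
        1 ≤ n ∧ c 0 = y ∧ c n = x ∧ t = ∑ i ∈ Finset.range n, d (c i) (c (i + 1)) ^ p} := by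
      rintro x y t ⟨n, c, hn, h0, h1, rfl⟩
      refine ⟨n, fun i => c (n - i), hn, by simp [h1], by simp [h0], ?_⟩
      have hrefl := Finset.sum_range_reflect (fun i => d (c i) (c (i + 1)) ^ p) n
      rw [← hrefl]
      refine Finset.sum_congr rfl fun i hi => ?_
      simp only [Finset.mem_range] at hi
      simp only
      rw [show n - 1 - i + 1 = n - i from by omega, show n - 1 - i = n - (i + 1) from by omega,
        hsymm]
    intro x y
    rw [hρ x y, hρ y x]
    congr 1
    ext t
    exact ⟨fun h => hsub x y t h, fun h => hsub y x t h⟩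
  · -- triangle inequality
    intro x y z
    refine le_of_forall_pos_le_add fun ε hε => ?_
    have h1 : ∃ a ∈ {t : ℝ | ∃ (n : ℕ) (c : ℕ → X),
        1 ≤ n ∧ c 0 = x ∧ c n = z ∧ t = ∑ i ∈ Finset.range n, d (c i) (c (i + 1)) ^ p},
        a < ρ x z + ε / 2 := by
      rw [hρ x z]
      exact Real.lt_sInf_add_pos ⟨_, hmem x z⟩ (half_pos hε)
    have h2 : ∃ b ∈ {t : ℝ | ∃ (n : ℕ) (c : ℕ → X),
        1 ≤ n ∧ c 0 = z ∧ c n = y ∧ t = ∑ i ∈ Finset.range n, d (c i) (c (i + 1)) ^ p},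
        b < ρ z y + ε / 2 := by
      rw [hρ z y]
      exact Real.lt_sInf_add_pos ⟨_, hmem z y⟩ (half_pos hε)
    obtain ⟨a, ⟨n, c, hn, hc0, hcn, hasum⟩, ha⟩ := h1
    obtain ⟨b, ⟨m, e, hm, he0, hem, hbsum⟩, hb⟩ := h2
    have hmem_ab : a + b ∈ {t : ℝ | ∃ (n : ℕ) (c : ℕ → X),
        1 ≤ n ∧ c 0 = x ∧ c n = y ∧ t = ∑ i ∈ Finset.range n, d (c i) (c (i + 1)) ^ p} := by
      refine ⟨n + m, fun i => if i < n then c i else e (i - n), by omega, ?_, ?_, ?_⟩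
      · simp only [show (0 : ℕ) < n from hn, if_true]
        exact hc0
      · have hnm : ¬ (n + m < n) := by omega
        simp only [hnm, if_false, show n + m - n = m from by omega]
        exact hem
      · rw [hasum, hbsum, Finset.sum_range_add]
        congr 1
        · refine Finset.sum_congr rfl fun i hi => ?_
          simp only [Finset.mem_range] at hi
          by_cases h : i + 1 < n
          · simp [hi, h]
          · have hin : i + 1 = n := by omega
            simp only [hi, if_true, h, if_false]
            rw [show i + 1 - n = 0 from by omega, he0, hin, hcn]
        · refine Finset.sum_congr rfl fun j hj => ?_
          have h1 : ¬ (n + j < n) := by omega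
          have h2 : ¬ (n + j + 1 < n) := by omega
          simp only [h1, h2, if_false, show n + j - n = j from by omega,
            show n + j + 1 - n = j + 1 from by omega]
    have hle : ρ x y ≤ a + b := by
      rw [hρ x y]
      exact csInf_le ⟨_, hlb x y⟩ hmem_ab
    linarith
end

section
/- (Aimar) Let X be a nonempty set and U : X × (0,∞) → P(X) satisfy: (i) ⋂_{r>0} U(x,r) = {x} for every x; (ii) ⋃_{r>0} U(x,r) = X for every x; (iii) 0 < r₁ ≤ r₂ implies U(x,r₁) ⊆ U(x,r₂); and (iv) there exists c ≥ 1 such that whenever y ∈ U(x,r) one has U(x,r) ⊆ U(y,cr) and U(y,r) ⊆ U(x,cr). Define d(x,y) = inf{ r > 0 : y ∈ U(x,r) and x ∈ U(y,r) }. Then: (1) d is a b-metric on X satisfying the c-relaxed triangle inequality d(x,y) ≤ c(d(x,z) + d(z,y)); and (2) for every γ > 1, every x ∈ X and every r > 0, U(x, r/(γc)) ⊆ B_d(x,r) ⊆ U(x,r), where B_d(x,r) = {y ∈ X : d(x,y) < r}. -/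
/-- **Aimar's axiomatic characterization of balls.** Given a family of formal balls
`U(x,r)` satisfying (i)–(iv), the function
`d(x,y) = inf{r > 0 : y ∈ U(x,r) and x ∈ U(y,r)}` is a b-metric satisfying the
`c`-relaxed triangle inequality, and `U(x, r/(γc)) ⊆ B_d(x,r) ⊆ U(x,r)` for `γ > 1`. -/
theorem aimar_formal_balls {X : Type*} [Nonempty X]
    (U : X → ℝ → Set X) (c : ℝ) (hc : 1 ≤ c)
    (h1 : ∀ x : X, (⋂ r > (0:ℝ), U x r) = {x})
    (h2 : ∀ x : X, (⋃ r > (0:ℝ), U x r) = Set.univ)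
    (h3 : ∀ (x : X) (r₁ r₂ : ℝ), 0 < r₁ → r₁ ≤ r₂ → U x r₁ ⊆ U x r₂)
    (h4 : ∀ (x y : X) (r : ℝ), 0 < r → y ∈ U x r →
      U x r ⊆ U y (c * r) ∧ U y r ⊆ U x (c * r))
    (d : X → X → ℝ)
    (hd : ∀ x y, d x y = sInf {r : ℝ | 0 < r ∧ y ∈ U x r ∧ x ∈ U y r}) :
    (∀ x y, 0 ≤ d x y) ∧
    (∀ x y, d x y = 0 ↔ x = y) ∧
    (∀ x y, d x y = d y x) ∧
    (∀ x y z, d x y ≤ c * (d x z + d z y)) ∧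
    (∀ γ : ℝ, 1 < γ → ∀ (x : X) (r : ℝ), 0 < r →
      U x (r / (γ * c)) ⊆ {y | d x y < r} ∧ {y | d x y < r} ⊆ U x r) := by
  have hc0 : (0:ℝ) < c := lt_of_lt_of_le one_pos hc
  -- x belongs to each of its own balls
  have hxUx : ∀ (x : X) (r : ℝ), 0 < r → x ∈ U x r := by
    intro x r hr
    have hx : x ∈ (⋂ r > (0:ℝ), U x r) := by
      rw [h1]; exact rfl
    exact Set.mem_iInter₂.mp hx r hr
  set S : X → X → Set ℝ := fun x y => {r : ℝ | 0 < r ∧ y ∈ U x r ∧ x ∈ U y r} with hS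
  have hdS : ∀ x y, d x y = sInf (S x y) := hd
  have hne : ∀ x y, (S x y).Nonempty := by
    intro x y
    have hy : y ∈ (⋃ r > (0:ℝ), U x r) := by rw [h2]; trivial
    have hx : x ∈ (⋃ r > (0:ℝ), U y r) := by rw [h2]; trivial
    obtain ⟨r₁, hr₁, hyr⟩ := Set.mem_iUnion₂.mp hy
    obtain ⟨r₂, hr₂, hxr⟩ := Set.mem_iUnion₂.mp hx
    exact ⟨max r₁ r₂, lt_of_lt_of_le hr₁ (le_max_left _ _),
      h3 x r₁ _ hr₁ (le_max_left _ _) hyr,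
      h3 y r₂ _ hr₂ (le_max_right _ _) hxr⟩
  have hbdd : ∀ x y, BddBelow (S x y) := fun x y => ⟨0, fun r hr => le_of_lt hr.1⟩
  have hle : ∀ x y r, r ∈ S x y → d x y ≤ r := by
    intro x y r hr
    rw [hdS]
    exact csInf_le (hbdd x y) hr
  have hnonneg : ∀ x y, 0 ≤ d x y := by
    intro x y
    rw [hdS]
    exact le_csInf (hne x y) (fun r hr => le_of_lt hr.1)
  have hlt : ∀ x y r, d x y < r → ∃ s ∈ S x y, s < r := by
    intro x y r h
    rw [hdS] at h
    exact exists_lt_of_csInf_lt (hne x y) h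
  refine ⟨hnonneg, ?_, ?_, ?_, ?_⟩
  · -- d x y = 0 ↔ x = y
    intro x y
    constructor
    · intro h0
      have hy : y ∈ (⋂ r > (0:ℝ), U x r) := by
        refine Set.mem_iInter₂.mpr fun r hr => ?_
        obtain ⟨s, hs, hsr⟩ := hlt x y r (by rw [h0]; exact hr)
        exact h3 x s r hs.1 (le_of_lt hsr) hs.2.1
      rw [h1] at hy
      exact hy.symm
    · rintro rfl
      have hSx : S x x = Set.Ioi (0:ℝ) := by
        ext r
        exact ⟨fun h => h.1, fun h => ⟨h, hxUx x r h, hxUx x r h⟩⟩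
      rw [hdS, hSx, csInf_Ioi]
  · -- symmetry
    intro x y
    have : S x y = S y x := by
      ext r; constructor <;> rintro ⟨h0, ha, hb⟩ <;> exact ⟨h0, hb, ha⟩
    rw [hdS, hdS, this]
  · -- triangle
    intro x y z
    refine le_of_forall_pos_le_add fun ε hε => ?_
    have hε' : 0 < ε / (2 * c) := by positivity
    obtain ⟨r, hr, hrlt⟩ := hlt x z (d x z + ε / (2 * c)) (by linarith)
    obtain ⟨t, ht, htlt⟩ := hlt z y (d z y + ε / (2 * c)) (by linarith)
    have hrt : 0 < r + t := by linarith [hr.1, ht.1]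
    -- z ∈ U x (r+t) and z ∈ U y (r+t)
    have hzx : z ∈ U x (r + t) := h3 x r _ hr.1 (by linarith [ht.1]) hr.2.1
    have hzy : z ∈ U y (r + t) := h3 y t _ ht.1 (by linarith [hr.1]) ht.2.2
    have h4x := h4 x z (r + t) hrt hzx
    have h4y := h4 y z (r + t) hrt hzy
    have hyU : y ∈ U x (c * (r + t)) :=
      h4x.2 (h3 z t _ ht.1 (by linarith [hr.1]) ht.2.1)
    have hxU : x ∈ U y (c * (r + t)) :=
      h4y.2 (h3 z r _ hr.1 (by linarith [ht.1]) hr.2.2)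
    have hmem : c * (r + t) ∈ S x y := ⟨by positivity, hyU, hxU⟩
    have := hle x y _ hmem
    have hcrt : c * (r + t) ≤ c * (d x z + d z y) + ε := by
      have : r + t ≤ d x z + d z y + ε / c := by
        have h2c : ε / (2 * c) + ε / (2 * c) = ε / c := by field_simp; ring
        linarith
      have hm := mul_le_mul_of_nonneg_left this (le_of_lt hc0)
      have hce : c * (ε / c) = ε := by field_simp
      nlinarith
    linarith
  · -- balls
    intro γ hγ x r hr
    have hγ0 : (0:ℝ) < γ := lt_trans one_pos hγ
    constructor
    · intro y hy
      set t := r / (γ * c) with hT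
      have ht : 0 < t := by positivity
      have h4' := h4 x y t ht hy
      have hx : x ∈ U y (c * t) := h4'.1 (hxUx x t ht)
      have hy' : y ∈ U x (c * t) := h3 x t _ ht (by nlinarith) hy
      have hmem : c * t ∈ S x y := ⟨by positivity, hy', hx⟩
      have hdle := hle x y _ hmem
      have hct : c * t = r / γ := by
        rw [hT]; field_simp
      have : r / γ < r := by
        rw [div_lt_iff₀ hγ0]; nlinarith
      simp only [Set.mem_setOf_eq]
      calc d x y ≤ c * t := hdle
        _ = r / γ := hct
        _ < r := this
    · intro y hy
      simp only [Set.mem_setOf_eq] at hy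
      obtain ⟨s, hs, hsr⟩ := hlt x y r hy
      exact h3 x s r hs.1 (le_of_lt hsr) hs.2.1
end

section
/- (Aimar) Let X be a nonempty set, Δ = {(x,x) : x ∈ X} the diagonal of X × X, and V : (0,∞) → P(X × X) satisfy: (j) ⋂_{r>0} V(r) = Δ; (jj) ⋃_{r>0} V(r) = X × X; (jjj) 0 < r₁ ≤ r₂ implies V(r₁) ⊆ V(r₂); and (jv) there exists c ≥ 1 such that if (x,z) ∈ V(r) and (z,y) ∈ V(r) for some z, then (x,y) ∈ V(cr). Define d(x,y) = inf{ r > 0 : (x,y) ∈ V(r) }. Then: (1) d satisfies the c-relaxed triangle inequality d(x,y) ≤ c(d(x,z) + d(z,y)) for all x,y,z ∈ X; and (2) for every γ with 0 < γ < 1 and every r > 0, V(γr) ⊆ W_d(r) ⊆ V(r), where W_d(r) = {(x,y) ∈ X × X : d(x,y) < r}. -/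
/-!
`d(p)` is the infimum of the radii `r` with `p ∈ V r`, so by monotonicity `d p < r` forces
`p ∈ V s` for some `s < r`, and `p ∈ V r` forces `d p ≤ r`; this gives the two inclusions.
For the relaxed triangle inequality, choose radii `s > d(x,z)` and `t > d(z,y)`: both pairs lie in
`V (max s t)`, so `(x,y) ∈ V (c · max s t)` and `d(x,y) ≤ c (s + t)`; let `s, t` decrease.
-/

open Set

namespace Aimar

variable {α : Type*} (V : ℝ → Set α)

noncomputable def radius (p : α) : ℝ := sInf {r : ℝ | 0 < r ∧ p ∈ V r}

variable {V}

lemma radius_nonneg (p : α) : 0 ≤ radius V p :=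
  Real.sInf_nonneg fun _ hr => hr.1.le

lemma radius_le {p : α} {r : ℝ} (hr : 0 < r) (hp : p ∈ V r) : radius V p ≤ r :=
  csInf_le ⟨0, fun _ hs => hs.1.le⟩ ⟨hr, hp⟩

lemma mem_of_radius_lt (hV : MonotoneOn V (Ioi 0)) {p : α} (hp : ∃ r > 0, p ∈ V r) {r : ℝ}
    (h : radius V p < r) : p ∈ V r := by
  obtain ⟨s, ⟨hs, hps⟩, hsr⟩ := (csInf_lt_iff ⟨0, fun _ hs => hs.1.le⟩ hp).mp h
  exact hV hs (hs.trans hsr) hsr.le hps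

section Pairs

variable {X : Type*} {V : ℝ → Set (X × X)} {c : ℝ}

lemma radius_le_mul_add (hc : 0 < c) (hV : MonotoneOn V (Ioi 0)) (hcov : ∀ p, ∃ r > 0, p ∈ V r)
    (htrans : ∀ r, 0 < r → ∀ x y z : X, (x, z) ∈ V r → (z, y) ∈ V r → (x, y) ∈ V (c * r))
    {x y z : X} {s t : ℝ} (hs : radius V (x, z) < s) (ht : radius V (z, y) < t) :
    radius V (x, y) ≤ c * (s + t) := by
  have hs₀ : 0 < s := (radius_nonneg _).trans_lt hs
  have ht₀ : 0 < t := (radius_nonneg _).trans_lt ht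
  have hm : 0 < max s t := lt_max_of_lt_left hs₀
  have hxz : (x, z) ∈ V (max s t) :=
    hV hs₀ hm (le_max_left s t) (mem_of_radius_lt hV (hcov _) hs)
  have hzy : (z, y) ∈ V (max s t) :=
    hV ht₀ hm (le_max_right s t) (mem_of_radius_lt hV (hcov _) ht)
  calc radius V (x, y) ≤ c * max s t := radius_le (mul_pos hc hm) (htrans _ hm x y z hxz hzy)
    _ ≤ c * (s + t) := by gcongr; exact max_le_add_of_nonneg hs₀.le ht₀.le

lemma radius_le_mul_radius_add (hc : 0 < c) (hV : MonotoneOn V (Ioi 0))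
    (hcov : ∀ p, ∃ r > 0, p ∈ V r)
    (htrans : ∀ r, 0 < r → ∀ x y z : X, (x, z) ∈ V r → (z, y) ∈ V r → (x, y) ∈ V (c * r))
    (x y z : X) : radius V (x, y) ≤ c * (radius V (x, z) + radius V (z, y)) := by
  refine le_of_forall_gt_imp_ge_of_dense fun u hu => ?_
  have hlt : radius V (x, z) < u / c - radius V (z, y) := by
    rw [lt_sub_iff_add_lt, lt_div_iff₀ hc]; linarith
  obtain ⟨s, hs, hsu⟩ := exists_between hlt
  calc radius V (x, y) ≤ c * (s + (u / c - s)) :=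
        radius_le_mul_add hc hV hcov htrans hs (by linarith)
    _ = u := by field_simp; ring

end Pairs

end Aimar

open Aimar

theorem aimar_antourages_general {X : Type*}
    (V : ℝ → Set (X × X)) (c : ℝ) (hc : 1 ≤ c)
    (h2 : (⋃ r > (0:ℝ), V r) = Set.univ)
    (h3 : ∀ r₁ r₂ : ℝ, 0 < r₁ → r₁ ≤ r₂ → V r₁ ⊆ V r₂)
    (h4 : ∀ (r : ℝ), 0 < r → ∀ x y z : X, (x, z) ∈ V r → (z, y) ∈ V r → (x, y) ∈ V (c * r))
    (d : X → X → ℝ)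
    (hd : ∀ x y, d x y = sInf {r : ℝ | 0 < r ∧ (x, y) ∈ V r}) :
    (∀ x y z, d x y ≤ c * (d x z + d z y)) ∧
    (∀ γ : ℝ, 0 < γ → γ < 1 → ∀ r : ℝ, 0 < r →
      V (γ * r) ⊆ {p : X × X | d p.1 p.2 < r} ∧ {p : X × X | d p.1 p.2 < r} ⊆ V r) := by
  have hd' : ∀ x y, d x y = radius V (x, y) := hd
  have hV : MonotoneOn V (Ioi 0) := fun r₁ h₁ r₂ _ hle => h3 r₁ r₂ h₁ hle
  have hcov : ∀ p, ∃ r > 0, p ∈ V r := fun p => by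
    simpa using (h2.symm ▸ mem_univ p : p ∈ ⋃ r > (0:ℝ), V r)
  simp only [hd', Prod.mk.eta]
  refine ⟨radius_le_mul_radius_add (by linarith) hV hcov h4, fun γ hγ hγ1 r hr => ⟨?_, ?_⟩⟩
  · exact fun p hp => (radius_le (by positivity) hp).trans_lt (by nlinarith)
  · exact fun p hp => mem_of_radius_lt hV (hcov p) hp

/-- **Aimar's characterization via antourages.** Given a family `V(r) ⊆ X × X`
satisfying (j)–(jv), the function `d(x,y) = inf{r > 0 : (x,y) ∈ V(r)}` satisfies
the `c`-relaxed triangle inequality and `V(γr) ⊆ W_d(r) ⊆ V(r)` for `0 < γ < 1`. -/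
theorem aimar_antourages {X : Type*} [Nonempty X]
    (V : ℝ → Set (X × X)) (c : ℝ) (hc : 1 ≤ c)
    (h1 : (⋂ r > (0:ℝ), V r) = {p : X × X | p.1 = p.2})
    (h2 : (⋃ r > (0:ℝ), V r) = Set.univ)
    (h3 : ∀ r₁ r₂ : ℝ, 0 < r₁ → r₁ ≤ r₂ → V r₁ ⊆ V r₂)
    (h4 : ∀ (r : ℝ), 0 < r → ∀ x y z : X, (x, z) ∈ V r → (z, y) ∈ V r → (x, y) ∈ V (c * r))
    (d : X → X → ℝ)
    (hd : ∀ x y, d x y = sInf {r : ℝ | 0 < r ∧ (x, y) ∈ V r}) :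
    (∀ x y z, d x y ≤ c * (d x z + d z y)) ∧
    (∀ γ : ℝ, 0 < γ → γ < 1 → ∀ r : ℝ, 0 < r →
      V (γ * r) ⊆ {p : X × X | d p.1 p.2 < r} ∧ {p : X × X | d p.1 p.2 < r} ⊆ V r) :=
  aimar_antourages_general V c hc h2 h3 h4 d hd
end

section
/- Let d be a strong b-metric on X with constant s ≥ 1. Then d satisfies the s-relaxed polygonal inequality: d(x₀,xₙ) ≤ s(d(x₀,x₁) + d(x₁,x₂) + ⋯ + d(x_{n−1},xₙ)) for all n ∈ ℕ and all x₀, x₁, …, xₙ ∈ X. -/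
/- Unrolling `d x y ≤ d x z + s * d z y` along the chain from the far end pays the factor `s`
on every step except the first; paying it on the first step as well costs nothing since
`d ≥ 0` and `s ≥ 1`. -/

lemma dist_le_first_add_mul_sum_of_le_add_mul {X : Type*} (d : X → X → ℝ) (s : ℝ)
    (htri : ∀ x y z, d x y ≤ d x z + s * d z y) (x : ℕ → X) (n : ℕ) :
    d (x 0) (x (n + 1)) ≤ d (x 0) (x 1) + s * ∑ i ∈ Finset.range n, d (x (i + 1)) (x (i + 2)) := by
  induction n with
  | zero => simp
  | succ n ih =>
    calc d (x 0) (x (n + 2)) ≤ d (x 0) (x (n + 1)) + s * d (x (n + 1)) (x (n + 2)) := htri _ _ _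
      _ ≤ d (x 0) (x 1) + s * ∑ i ∈ Finset.range (n + 1), d (x (i + 1)) (x (i + 2)) := by
        rw [Finset.sum_range_succ]; linarith

theorem strong_bmetric_relaxed_polygonal_general {X : Type*}
    (d : X → X → ℝ) (s : ℝ) (hs : 1 ≤ s)
    (hnonneg : ∀ x y, 0 ≤ d x y)
    (htri : ∀ x y z, d x y ≤ d x z + s * d z y)
    (n : ℕ) (hn : 1 ≤ n) (x : ℕ → X) :
    d (x 0) (x n) ≤ s * ∑ i ∈ Finset.range n, d (x i) (x (i + 1)) := by
  obtain ⟨m, rfl⟩ := Nat.exists_eq_add_of_le' hn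
  have hfirst : d (x 0) (x 1) ≤ s * d (x 0) (x 1) := le_mul_of_one_le_left (hnonneg _ _) hs
  calc d (x 0) (x (m + 1))
      ≤ d (x 0) (x 1) + s * ∑ i ∈ Finset.range m, d (x (i + 1)) (x (i + 2)) :=
        dist_le_first_add_mul_sum_of_le_add_mul d s htri x m
    _ ≤ s * ∑ i ∈ Finset.range (m + 1), d (x i) (x (i + 1)) := by
        rw [Finset.sum_range_succ', mul_add]; linarith

/-- A strong b-metric with constant `s` satisfies the `s`-relaxed polygonal
inequality. -/
theorem strong_bmetric_relaxed_polygonal {X : Type*}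
    (d : X → X → ℝ) (s : ℝ) (hs : 1 ≤ s)
    (hnonneg : ∀ x y, 0 ≤ d x y)
    (heq : ∀ x y, d x y = 0 ↔ x = y)
    (hsymm : ∀ x y, d x y = d y x)
    (htri : ∀ x y z, d x y ≤ d x z + s * d z y)
    (n : ℕ) (hn : 1 ≤ n) (x : ℕ → X) :
    d (x 0) (x n) ≤ s * ∑ i ∈ Finset.range n, d (x i) (x (i + 1)) :=
  strong_bmetric_relaxed_polygonal_general d s hs hnonneg htri n hn x
end

section
/- (Uniqueness of the completion of a strong b-metric space) Let (X,d) be a strong b-metric space with constant s ≥ 1 and let (X₁,d₁) and (X₂,d₂) be complete strong b-metric spaces with constant s that are both completions of (X,d), i.e. for k = 1,2 there is an isometric embedding j_k : X → X_k with j_k(X) dense in X_k. Then (X₁,d₁) and (X₂,d₂) are isometric: there exists a bijection F : X₁ → X₂ with d₂(F(u), F(v)) = d₁(u,v) for all u,v ∈ X₁. -/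
/-!
Extend `j₂ ∘ j₁⁻¹` to `F : X₁ → X₂` by sending `ξ = lim j₁ (uₙ)` to `lim j₂ (uₙ)`: the sequence
`j₂ (uₙ)` is Cauchy because `j₁` and `j₂` are isometric, and its limit does not depend on the choice
of `u`. Distances in a strong b-metric space are continuous along convergent sequences, so `F` is
isometric. The extension `G : X₂ → X₁` built the same way inverts `F`, by uniqueness of limits.
-/

open Filter

/-- `d` is a strong b-metric on `X` with constant `s`. -/
def IsStrongBMetric {X : Type*} (s : ℝ) (d : X → X → ℝ) : Prop :=
  (∀ x y, 0 ≤ d x y) ∧ (∀ x y, d x y = 0 ↔ x = y) ∧ (∀ x y, d x y = d y x) ∧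
  (∀ x y z, d x y ≤ d x z + s * d z y)

/-- A sequence is Cauchy for `d` if `d(xₙ,xₘ) → 0` as `n,m → ∞`. -/
def IsBCauchy {X : Type*} (d : X → X → ℝ) (u : ℕ → X) : Prop :=
  ∀ ε : ℝ, 0 < ε → ∃ N : ℕ, ∀ m ≥ N, ∀ n ≥ N, d (u m) (u n) < ε

/-- `d` is complete: every Cauchy sequence converges. -/
def IsBComplete {X : Type*} (d : X → X → ℝ) : Prop :=
  ∀ u : ℕ → X, IsBCauchy d u → ∃ x : X, Tendsto (fun n => d x (u n)) atTop (nhds 0)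

open Topology

namespace IsStrongBMetric

variable {Y : Type*} {s : ℝ} {d : Y → Y → ℝ}

lemma nonneg (h : IsStrongBMetric s d) (x y : Y) : 0 ≤ d x y := h.1 x y

lemma dist_eq_zero (h : IsStrongBMetric s d) {x y : Y} : d x y = 0 ↔ x = y := h.2.1 x y

lemma dist_self (h : IsStrongBMetric s d) (x : Y) : d x x = 0 := h.dist_eq_zero.2 rfl

lemma dist_comm (h : IsStrongBMetric s d) (x y : Y) : d x y = d y x := h.2.2.1 x y

lemma dist_le (h : IsStrongBMetric s d) (x y z : Y) : d x y ≤ d x z + s * d z y := h.2.2.2 x y z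

lemma dist_le_mul_add (h : IsStrongBMetric s d) (x y z : Y) : d x y ≤ s * d x z + d z y := by
  have := h.dist_le y x z
  rw [h.dist_comm y x, h.dist_comm y z, h.dist_comm z x] at this
  linarith

lemma abs_dist_sub_dist_le (h : IsStrongBMetric s d) (a b ξ η : Y) :
    |d a b - d ξ η| ≤ s * (d a ξ + d b η) := by
  rw [abs_sub_le_iff]
  constructor
  · have h₁ := h.dist_le_mul_add a b ξ
    have h₂ := h.dist_le ξ b η
    rw [h.dist_comm η b] at h₂
    linarith
  · have h₁ := h.dist_le_mul_add ξ η a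
    have h₂ := h.dist_le a η b
    rw [h.dist_comm ξ a] at h₁
    linarith

lemma tendsto_dist (h : IsStrongBMetric s d) {a b : ℕ → Y} {ξ η : Y}
    (ha : Tendsto (fun n => d (a n) ξ) atTop (𝓝 0))
    (hb : Tendsto (fun n => d (b n) η) atTop (𝓝 0)) :
    Tendsto (fun n => d (a n) (b n)) atTop (𝓝 (d ξ η)) := by
  rw [tendsto_iff_norm_sub_tendsto_zero]
  refine squeeze_zero (fun n => norm_nonneg _) (fun n => h.abs_dist_sub_dist_le _ _ _ _) ?_
  simpa using (ha.add hb).const_mul s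

lemma eq_of_tendsto (h : IsStrongBMetric s d) {a : ℕ → Y} {ξ η : Y}
    (hξ : Tendsto (fun n => d (a n) ξ) atTop (𝓝 0))
    (hη : Tendsto (fun n => d (a n) η) atTop (𝓝 0)) : ξ = η := by
  have := h.tendsto_dist hξ hη
  simp only [h.dist_self] at this
  exact h.dist_eq_zero.1 (tendsto_nhds_unique tendsto_const_nhds this).symm

lemma tendsto_of_dist_tendsto_zero (h : IsStrongBMetric s d) {a b : ℕ → Y} {ξ : Y}
    (hba : Tendsto (fun n => d (b n) (a n)) atTop (𝓝 0))
    (ha : Tendsto (fun n => d (a n) ξ) atTop (𝓝 0)) :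
    Tendsto (fun n => d (b n) ξ) atTop (𝓝 0) :=
  squeeze_zero (fun n => h.nonneg _ _) (fun n => h.dist_le (b n) ξ (a n))
    (by simpa using hba.add (ha.const_mul s))

lemma isBCauchy_of_tendsto (h : IsStrongBMetric s d) {u : ℕ → Y} {ξ : Y}
    (hu : Tendsto (fun n => d (u n) ξ) atTop (𝓝 0)) : IsBCauchy d u := by
  intro ε hε
  have hsum : Tendsto (fun p : ℕ × ℕ => d (u p.1) ξ + s * d (u p.2) ξ) (atTop ×ˢ atTop) (𝓝 0) := by
    simpa using (hu.comp tendsto_fst).add ((hu.comp tendsto_snd).const_mul s)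
  rw [prod_atTop_atTop_eq] at hsum
  obtain ⟨N, hN⟩ := eventually_atTop_prod_self'.1 (hsum.eventually (gt_mem_nhds hε))
  refine ⟨N, fun m hm n hn => ?_⟩
  calc d (u m) (u n) ≤ d (u m) ξ + s * d ξ (u n) := h.dist_le _ _ _
    _ = d (u m) ξ + s * d (u n) ξ := by rw [h.dist_comm ξ]
    _ < ε := hN m hm n hn

end IsStrongBMetric

lemma isBCauchy_comp_iff {X Y : Type*} {d : X → X → ℝ} {d' : Y → Y → ℝ} {f : X → Y}
    (hf : ∀ x y, d' (f x) (f y) = d x y) {u : ℕ → X} :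
    IsBCauchy d' (fun n => f (u n)) ↔ IsBCauchy d u := by
  simp only [IsBCauchy, hf]

section Extension

variable {X X₁ X₂ : Type*} {s₁ s₂ : ℝ} {d : X → X → ℝ} {d₁ : X₁ → X₁ → ℝ} {d₂ : X₂ → X₂ → ℝ}
  {j₁ : X → X₁} {j₂ : X → X₂}

lemma exists_extension_tendsto (hd₁ : IsStrongBMetric s₁ d₁) (hd₂ : IsStrongBMetric s₂ d₂)
    (hc₂ : IsBComplete d₂) (hj₁ : ∀ x y, d₁ (j₁ x) (j₁ y) = d x y)
    (hdense₁ : ∀ ξ : X₁, ∃ u : ℕ → X, Tendsto (fun n => d₁ (j₁ (u n)) ξ) atTop (𝓝 0))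
    (hj₂ : ∀ x y, d₂ (j₂ x) (j₂ y) = d x y) :
    ∃ F : X₁ → X₂, ∀ ξ (u : ℕ → X), Tendsto (fun n => d₁ (j₁ (u n)) ξ) atTop (𝓝 0) →
      Tendsto (fun n => d₂ (j₂ (u n)) (F ξ)) atTop (𝓝 0) := by
  choose u hu using hdense₁
  have hcauchy : ∀ ξ, IsBCauchy d₂ (fun n => j₂ (u ξ n)) := fun ξ =>
    (isBCauchy_comp_iff hj₂).2 ((isBCauchy_comp_iff hj₁).1 (hd₁.isBCauchy_of_tendsto (hu ξ)))
  choose F hF using fun ξ => hc₂ _ (hcauchy ξ)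
  refine ⟨F, fun ξ v hv => hd₂.tendsto_of_dist_tendsto_zero ?_
    (by simpa only [hd₂.dist_comm (F ξ)] using hF ξ)⟩
  simpa only [hj₁, hj₂, hd₁.dist_self] using hd₁.tendsto_dist hv (hu ξ)

lemma dist_extension_eq (hd₁ : IsStrongBMetric s₁ d₁) (hd₂ : IsStrongBMetric s₂ d₂)
    (hj₁ : ∀ x y, d₁ (j₁ x) (j₁ y) = d x y)
    (hdense₁ : ∀ ξ : X₁, ∃ u : ℕ → X, Tendsto (fun n => d₁ (j₁ (u n)) ξ) atTop (𝓝 0))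
    (hj₂ : ∀ x y, d₂ (j₂ x) (j₂ y) = d x y) {F : X₁ → X₂}
    (hF : ∀ ξ (u : ℕ → X), Tendsto (fun n => d₁ (j₁ (u n)) ξ) atTop (𝓝 0) →
      Tendsto (fun n => d₂ (j₂ (u n)) (F ξ)) atTop (𝓝 0))
    (ξ η : X₁) : d₂ (F ξ) (F η) = d₁ ξ η := by
  obtain ⟨u, hu⟩ := hdense₁ ξ
  obtain ⟨v, hv⟩ := hdense₁ η
  have h₁ := hd₁.tendsto_dist hu hv
  have h₂ := hd₂.tendsto_dist (hF ξ u hu) (hF η v hv)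
  simp only [hj₁] at h₁
  simp only [hj₂] at h₂
  exact tendsto_nhds_unique h₂ h₁

end Extension

theorem strong_bmetric_completion_unique_general
    {X : Type*} {X₁ : Type*} {X₂ : Type*}
    (s : ℝ) (d : X → X → ℝ)
    (d₁ : X₁ → X₁ → ℝ) (hd₁ : IsStrongBMetric s d₁) (hc₁ : IsBComplete d₁)
    (d₂ : X₂ → X₂ → ℝ) (hd₂ : IsStrongBMetric s d₂) (hc₂ : IsBComplete d₂)
    (j₁ : X → X₁) (hj₁ : ∀ x y, d₁ (j₁ x) (j₁ y) = d x y)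
    (hdense₁ : ∀ ξ : X₁, ∃ u : ℕ → X, Tendsto (fun n => d₁ (j₁ (u n)) ξ) atTop (nhds 0))
    (j₂ : X → X₂) (hj₂ : ∀ x y, d₂ (j₂ x) (j₂ y) = d x y)
    (hdense₂ : ∀ ξ : X₂, ∃ u : ℕ → X, Tendsto (fun n => d₂ (j₂ (u n)) ξ) atTop (nhds 0)) :
    ∃ F : X₁ → X₂, Function.Bijective F ∧ ∀ u v : X₁, d₂ (F u) (F v) = d₁ u v := by
  obtain ⟨F, hF⟩ := exists_extension_tendsto hd₁ hd₂ hc₂ hj₁ hdense₁ hj₂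
  obtain ⟨G, hG⟩ := exists_extension_tendsto hd₂ hd₁ hc₁ hj₂ hdense₂ hj₁
  have hGF : Function.LeftInverse G F := fun ξ => by
    obtain ⟨u, hu⟩ := hdense₁ ξ
    exact hd₁.eq_of_tendsto (hG _ u (hF ξ u hu)) hu
  have hFG : Function.RightInverse G F := fun η => by
    obtain ⟨u, hu⟩ := hdense₂ η
    exact hd₂.eq_of_tendsto (hF _ u (hG η u hu)) hu
  exact ⟨F, ⟨hGF.injective, hFG.surjective⟩, dist_extension_eq hd₁ hd₂ hj₁ hdense₁ hj₂ hF⟩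

/-- **Uniqueness of the completion of a strong b-metric space.** -/
theorem strong_bmetric_completion_unique
    {X : Type*} [Nonempty X] {X₁ : Type*} {X₂ : Type*}
    (s : ℝ) (hs : 1 ≤ s) (d : X → X → ℝ) (hd : IsStrongBMetric s d)
    (d₁ : X₁ → X₁ → ℝ) (hd₁ : IsStrongBMetric s d₁) (hc₁ : IsBComplete d₁)
    (d₂ : X₂ → X₂ → ℝ) (hd₂ : IsStrongBMetric s d₂) (hc₂ : IsBComplete d₂)
    (j₁ : X → X₁) (hj₁ : ∀ x y, d₁ (j₁ x) (j₁ y) = d x y)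
    (hdense₁ : ∀ ξ : X₁, ∃ u : ℕ → X, Tendsto (fun n => d₁ (j₁ (u n)) ξ) atTop (nhds 0))
    (j₂ : X → X₂) (hj₂ : ∀ x y, d₂ (j₂ x) (j₂ y) = d x y)
    (hdense₂ : ∀ ξ : X₂, ∃ u : ℕ → X, Tendsto (fun n => d₂ (j₂ (u n)) ξ) atTop (nhds 0)) :
    ∃ F : X₁ → X₂, Function.Bijective F ∧ ∀ u v : X₁, d₂ (F u) (F v) = d₁ u v :=
  strong_bmetric_completion_unique_general s d d₁ hd₁ hc₁ d₂ hd₂ hc₂ j₁ hj₁ hdense₁ j₂ hj₂ hdense₂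
end

section
/- Let (X,d) be a complete b-metric space with constant s ≥ 1 and f : X → X a mapping such that for every ε > 0 there exists δ(ε) > 0 with the property: d(z, f(z)) < δ(ε) implies f(B(z,ε)) ⊆ B(z,ε), for every z ∈ X. If for some x ∈ X one has d(fⁿ(x), f^{n+1}(x)) → 0 as n → ∞, then the sequence of iterates (fⁿ(x)) converges to a fixed point of f, i.e. there is z ∈ X with f(z) = z and d(z, fⁿ(x)) → 0. -/
open Filter

/-! The hypothesis on `f` turns small steps into invariant balls: once `d(uₙ, uₙ₊₁)` is below
`δ(ε)`, every later iterate stays in `B(uₙ, ε)`, so the orbit is Cauchy and converges to some `z`.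
Applying the same invariance at an iterate `uₙ` close to `z` puts `f z` close to `uₙ`, hence
close to `z`, which forces `f z = z`. -/

section BMetric

variable {X : Type*} {d : X → X → ℝ} {s : ℝ}

theorem lt_of_lt_div_of_lt_div (hs : 0 < s) (hsymm : ∀ x y, d x y = d y x)
    (htri : ∀ x y z, d x y ≤ s * (d x z + d z y)) {a b c : X} {ε : ℝ}
    (ha : d c a < ε / (2 * s)) (hb : d c b < ε / (2 * s)) : d a b < ε :=
  calc d a b ≤ s * (d c a + d c b) := hsymm c a ▸ htri a b c
    _ < s * (ε / (2 * s) + ε / (2 * s)) := by gcongr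
    _ = ε := by field_simp; ring

variable {f : X → X}

theorem iterate_cauchy (hs : 0 < s) (hsymm : ∀ x y, d x y = d y x)
    (htri : ∀ x y z, d x y ≤ s * (d x z + d z y))
    (hf : ∀ ε : ℝ, 0 < ε → ∃ δ : ℝ, 0 < δ ∧
      ∀ z : X, d z (f z) < δ → ∀ y : X, d z y < ε → d z (f y) < ε)
    {x : X} (hx : Tendsto (fun n => d (f^[n] x) (f^[n + 1] x)) atTop (nhds 0))
    (ε : ℝ) (hε : 0 < ε) : ∃ N : ℕ, ∀ m ≥ N, ∀ n ≥ N, d (f^[m] x) (f^[n] x) < ε := by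
  have hε' : 0 < ε / (2 * s) := by positivity
  obtain ⟨δ, hδ, hinv⟩ := hf _ hε'
  obtain ⟨N, hstep_δ, hstep_ε⟩ :=
    ((hx.eventually (gt_mem_nhds hδ)).and (hx.eventually (gt_mem_nhds hε'))).exists
  let ball : Set X := {y | d (f^[N] x) y < ε / (2 * s)}
  have hmaps : Set.MapsTo f ball ball := fun y hy =>
    hinv _ (by rwa [← Function.iterate_succ_apply' f]) y hy
  have hnear : ∀ m ≥ N + 1, f^[m] x ∈ ball := fun m hm => by
    rw [← Nat.sub_add_cancel hm, Function.iterate_add_apply]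
    exact hmaps.iterate _ hstep_ε
  exact ⟨N + 1, fun m hm n hn =>
    lt_of_lt_div_of_lt_div hs hsymm htri (hnear m hm) (hnear n hn)⟩

theorem apply_eq_of_tendsto_iterate (hs : 0 < s) (hnonneg : ∀ x y, 0 ≤ d x y)
    (heq : ∀ x y, d x y = 0 ↔ x = y) (hsymm : ∀ x y, d x y = d y x)
    (htri : ∀ x y z, d x y ≤ s * (d x z + d z y))
    (hf : ∀ ε : ℝ, 0 < ε → ∃ δ : ℝ, 0 < δ ∧
      ∀ z : X, d z (f z) < δ → ∀ y : X, d z y < ε → d z (f y) < ε)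
    {x z : X} (hx : Tendsto (fun n => d (f^[n] x) (f^[n + 1] x)) atTop (nhds 0))
    (hz : Tendsto (fun n => d z (f^[n] x)) atTop (nhds 0)) : f z = z := by
  by_contra hne
  have hpos : 0 < d z (f z) :=
    (hnonneg _ _).lt_of_ne fun h => hne ((heq _ _).1 h.symm).symm
  have hε : 0 < d z (f z) / (2 * s) := by positivity
  obtain ⟨δ, hδ, hinv⟩ := hf _ hε
  obtain ⟨n, hstep, hnear⟩ :=
    ((hx.eventually (gt_mem_nhds hδ)).and (hz.eventually (gt_mem_nhds hε))).exists
  have hfz : d (f^[n] x) (f z) < d z (f z) / (2 * s) :=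
    hinv _ (by rwa [← Function.iterate_succ_apply' f]) z (by rwa [hsymm])
  exact lt_irrefl _ (lt_of_lt_div_of_lt_div hs hsymm htri (by rwa [hsymm]) hfz)

end BMetric

/-- **Fixed point lemma in complete b-metric spaces.** If for every `ε > 0` there is
`δ(ε) > 0` such that `d(z,f(z)) < δ(ε)` implies `f(B(z,ε)) ⊆ B(z,ε)`, and for some
`x` the distances of consecutive iterates tend to `0`, then the iterates of `x`
converge to a fixed point of `f`. -/
theorem iterates_converge_to_fixed_point {X : Type*}
    (d : X → X → ℝ) (s : ℝ) (hs : 1 ≤ s)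
    (hnonneg : ∀ x y, 0 ≤ d x y)
    (heq : ∀ x y, d x y = 0 ↔ x = y)
    (hsymm : ∀ x y, d x y = d y x)
    (htri : ∀ x y z, d x y ≤ s * (d x z + d z y))
    (hcomplete : ∀ u : ℕ → X,
      (∀ ε : ℝ, 0 < ε → ∃ N : ℕ, ∀ m ≥ N, ∀ n ≥ N, d (u m) (u n) < ε) →
      ∃ x : X, Tendsto (fun n => d x (u n)) atTop (nhds 0))
    (f : X → X)
    (hf : ∀ ε : ℝ, 0 < ε → ∃ δ : ℝ, 0 < δ ∧
      ∀ z : X, d z (f z) < δ → ∀ y : X, d z y < ε → d z (f y) < ε)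
    (x : X)
    (hx : Tendsto (fun n => d (f^[n] x) (f^[n + 1] x)) atTop (nhds 0)) :
    ∃ z : X, f z = z ∧ Tendsto (fun n => d z (f^[n] x)) atTop (nhds 0) := by
  have hs₀ : 0 < s := by linarith
  obtain ⟨z, hz⟩ := hcomplete _ (iterate_cauchy hs₀ hsymm htri hf hx)
  exact ⟨z, apply_eq_of_tendsto_iterate hs₀ hnonneg heq hsymm htri hf hx hz, hz⟩
end

section
/- (Fixed point alternative in generalized b-metric spaces) Let (X,d) be a complete generalized b-metric space with constant s ≥ 1, let φ : [0,∞) → [0,∞) be a function such that (a) φ is nondecreasing, (b) φⁿ(t) → 0 as n → ∞ for every t > 0, and (c) φ(t) < t/s for every t > 0, and let f : X → X satisfy d(f(x), f(y)) ≤ φ(d(x,y)) for all x,y ∈ X with d(x,y) < ∞. Then for every x ∈ X exactly one of the following alternatives holds: (A) d(fᵏ(x), f^{k+1}(x)) = +∞ for all k ∈ ℕ₀; or (B) the sequence of iterates (fⁿ(x)) converges to a fixed point of f, i.e. there is z ∈ X with f(z) = z and d(z, fⁿ(x)) → 0. -/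
open Filter
open scoped ENNReal

/-- **Fixed point alternative in complete generalized b-metric spaces.** For a
φ-contraction `f` on a complete generalized b-metric space (distances in `[0,∞]`)
and any `x`, either all consecutive iterate distances are `+∞`, or the iterates
converge to a fixed point of `f` — and exactly one of these alternatives holds. -/
theorem generalized_bmetric_fixed_point_alternative {X : Type*}
    (d : X → X → ℝ≥0∞) (s : ℝ) (hs : 1 ≤ s)
    (heq : ∀ x y, d x y = 0 ↔ x = y)
    (hsymm : ∀ x y, d x y = d y x)
    (htri : ∀ x y z, d x y ≤ ENNReal.ofReal s * (d x z + d z y))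
    (hcomplete : ∀ u : ℕ → X,
      (∀ ε : ℝ≥0∞, 0 < ε → ∃ N : ℕ, ∀ m ≥ N, ∀ n ≥ N, d (u m) (u n) < ε) →
      ∃ x : X, Tendsto (fun n => d x (u n)) atTop (nhds 0))
    (φ : ℝ → ℝ)
    (hφ_nonneg : ∀ t : ℝ, 0 ≤ t → 0 ≤ φ t)
    (hφ_mono : ∀ a b : ℝ, 0 ≤ a → a ≤ b → φ a ≤ φ b)
    (hφ_iter : ∀ t : ℝ, 0 < t → Tendsto (fun n => φ^[n] t) atTop (nhds 0))
    (hφ_lt : ∀ t : ℝ, 0 < t → φ t < t / s)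
    (f : X → X)
    (hf : ∀ x y : X, d x y < ⊤ →
      d (f x) (f y) ≤ ENNReal.ofReal (φ (d x y).toReal))
    (x : X) :
    Xor' (∀ k : ℕ, d (f^[k] x) (f^[k + 1] x) = ⊤)
      (∃ z : X, f z = z ∧ Tendsto (fun n => d z (f^[n] x)) atTop (nhds 0)) := by
  have hs0 : (0:ℝ) < s := lt_of_lt_of_le one_pos hs
  set S : ℝ≥0∞ := ENNReal.ofReal s with hSdef
  have hStop : S ≠ ⊤ := ENNReal.ofReal_ne_top
  have hφ0 : φ 0 = 0 := by
    by_contra h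
    have h0 : 0 < φ 0 := lt_of_le_of_ne (hφ_nonneg 0 le_rfl) (Ne.symm h)
    have ht : (0:ℝ) < s * φ 0 := mul_pos hs0 h0
    have h1 : φ 0 ≤ φ (s * φ 0) := hφ_mono 0 _ le_rfl ht.le
    have h2 : φ (s * φ 0) < φ 0 := by
      have h2' := hφ_lt _ ht
      have he : s * φ 0 / s = φ 0 := by field_simp
      rwa [he] at h2'
    exact absurd (h1.trans_lt h2) (lt_irrefl _)
  have hiter0 : ∀ n : ℕ, φ^[n] 0 = 0 := by
    intro n; induction n with
    | zero => rfl
    | succ n ih => rw [Function.iterate_succ_apply', ih, hφ0]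
  have hiter_nonneg : ∀ t : ℝ, 0 ≤ t → ∀ n : ℕ, 0 ≤ φ^[n] t := by
    intro t ht n
    induction n with
    | zero => exact ht
    | succ n ih => rw [Function.iterate_succ_apply']; exact hφ_nonneg _ ih
  have hφ_le : ∀ t : ℝ, 0 ≤ t → φ t ≤ t / s := by
    intro t ht
    rcases eq_or_lt_of_le ht with h | h
    · rw [← h, hφ0]; simp
    · exact (hφ_lt t h).le
  have htend : ∀ t : ℝ, 0 ≤ t → Tendsto (fun n => φ^[n] t) atTop (nhds 0) := by
    intro t ht
    rcases eq_or_lt_of_le ht with h | h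
    · simp only [← h, hiter0]
      exact tendsto_const_nhds
    · exact hφ_iter t h
  by_cases hA : ∀ k : ℕ, d (f^[k] x) (f^[k + 1] x) = ⊤
  · left
    refine ⟨hA, ?_⟩
    rintro ⟨z, _, hz⟩
    have hev : ∀ᶠ n in atTop, d z (f^[n] x) < 1 :=
      hz.eventually_lt_const (by norm_num)
    obtain ⟨N, hN⟩ := eventually_atTop.mp hev
    have h1 : d z (f^[N] x) < ⊤ := (hN N le_rfl).trans_le le_top
    have h2 : d z (f^[N + 1] x) < ⊤ := (hN (N + 1) (Nat.le_succ N)).trans_le le_top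
    have hfin : d (f^[N] x) (f^[N + 1] x) < ⊤ := by
      calc d (f^[N] x) (f^[N + 1] x)
          ≤ S * (d (f^[N] x) z + d z (f^[N + 1] x)) := htri _ _ _
        _ < ⊤ := by
            apply ENNReal.mul_lt_top hStop.lt_top
            rw [hsymm (f^[N] x) z]
            exact ENNReal.add_lt_top.mpr ⟨h1, h2⟩
    rw [hA N] at hfin
    exact lt_irrefl _ hfin
  · right
    refine ⟨?_, hA⟩
    push_neg at hA
    obtain ⟨k₀, hk₀⟩ := hA
    set y := f^[k₀] x with hydef
    have hyfin : d y (f y) ≠ ⊤ := by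
      rw [hydef, ← Function.iterate_succ_apply' f k₀ x]
      exact hk₀
    set t : ℝ := (d y (f y)).toReal with htdef
    have ht0 : 0 ≤ t := ENNReal.toReal_nonneg
    -- iterate bound
    have hbound : ∀ n : ℕ, d (f^[n] y) (f^[n + 1] y) ≤ ENNReal.ofReal (φ^[n] t) := by
      intro n
      induction n with
      | zero => simp [htdef, ENNReal.ofReal_toReal hyfin]
      | succ n ih =>
        have hfin : d (f^[n] y) (f^[n + 1] y) < ⊤ := ih.trans_lt ENNReal.ofReal_lt_top
        have hc := hf (f^[n] y) (f^[n + 1] y) hfin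
        rw [← Function.iterate_succ_apply' f n, ← Function.iterate_succ_apply' f (n + 1)] at hc
        refine hc.trans (ENNReal.ofReal_le_ofReal ?_)
        rw [Function.iterate_succ_apply' φ n]
        exact hφ_mono _ _ ENNReal.toReal_nonneg
          (ENNReal.toReal_le_of_le_ofReal (hiter_nonneg t ht0 n) ih)
    -- Cauchy estimate
    have hcauchy : ∀ ε : ℝ, 0 < ε → ∃ N : ℕ, ∀ n ≥ N, ∀ p : ℕ,
        d (f^[n] y) (f^[n + p] y) ≤ ENNReal.ofReal ε := by
      intro ε hε
      have hsφ : s * φ ε < ε := by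
        calc s * φ ε < s * (ε / s) := mul_lt_mul_of_pos_left (hφ_lt ε hε) hs0
          _ = ε := by field_simp
      have hη : (0:ℝ) < ε - s * φ ε := by linarith
      obtain ⟨N, hN⟩ := eventually_atTop.mp
        ((htend t ht0).eventually_lt_const (div_pos hη hs0))
      refine ⟨N, fun n hn p => ?_⟩
      induction p generalizing n with
      | zero =>
        have : d (f^[n] y) (f^[n + 0] y) = 0 := (heq _ _).mpr rfl
        rw [this]; exact zero_le
      | succ p ih =>
        have hIH := ih n hn
        have hfin : d (f^[n] y) (f^[n + p] y) < ⊤ := hIH.trans_lt ENNReal.ofReal_lt_top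
        have hc := hf (f^[n] y) (f^[n + p] y) hfin
        rw [← Function.iterate_succ_apply' f n, ← Function.iterate_succ_apply' f (n + p)] at hc
        have hc2 : d (f^[n + 1] y) (f^[n + p + 1] y) ≤ ENNReal.ofReal (φ ε) := by
          refine hc.trans (ENNReal.ofReal_le_ofReal ?_)
          exact hφ_mono _ _ ENNReal.toReal_nonneg
            (ENNReal.toReal_le_of_le_ofReal hε.le hIH)
        have h1 : d (f^[n] y) (f^[n + 1] y) ≤ ENNReal.ofReal ((ε - s * φ ε) / s) :=
          (hbound n).trans (ENNReal.ofReal_le_ofReal (hN n hn).le)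
        calc d (f^[n] y) (f^[n + (p + 1)] y)
            ≤ S * (d (f^[n] y) (f^[n + 1] y) + d (f^[n + 1] y) (f^[n + (p + 1)] y)) :=
              htri _ _ _
          _ ≤ S * (ENNReal.ofReal ((ε - s * φ ε) / s) + ENNReal.ofReal (φ ε)) := by
              gcongr
              exact hc2
          _ = ENNReal.ofReal (s * ((ε - s * φ ε) / s + φ ε)) := by
              rw [← ENNReal.ofReal_add (div_nonneg hη.le hs0.le) (hφ_nonneg ε hε.le),
                ← ENNReal.ofReal_mul hs0.le]
          _ ≤ ENNReal.ofReal ε := by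
              apply ENNReal.ofReal_le_ofReal
              have hfs : s * ((ε - s * φ ε) / s + φ ε) = ε - s * φ ε + s * φ ε := by
                field_simp
              rw [hfs]; linarith
    -- Cauchy sequence
    have hCS : ∀ ε : ℝ≥0∞, 0 < ε → ∃ N : ℕ, ∀ m ≥ N, ∀ n ≥ N,
        d (f^[m] y) (f^[n] y) < ε := by
      intro ε hε
      obtain ⟨r, hr0, hrε⟩ := exists_between hε
      have hrtop : r ≠ ⊤ := (hrε.trans_le le_top).ne
      obtain ⟨N, hN⟩ := hcauchy r.toReal (ENNReal.toReal_pos hr0.ne' hrtop)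
      refine ⟨N, fun m hm n hn => ?_⟩
      rcases le_total m n with h | h
      · obtain ⟨p, rfl⟩ := Nat.exists_eq_add_of_le h
        calc d (f^[m] y) (f^[m + p] y) ≤ ENNReal.ofReal r.toReal := hN m hm p
          _ = r := ENNReal.ofReal_toReal hrtop
          _ < ε := hrε
      · obtain ⟨p, rfl⟩ := Nat.exists_eq_add_of_le h
        rw [hsymm]
        calc d (f^[n] y) (f^[n + p] y) ≤ ENNReal.ofReal r.toReal := hN n hn p
          _ = r := ENNReal.ofReal_toReal hrtop
          _ < ε := hrε
    obtain ⟨z, hz⟩ := hcomplete (fun n => f^[n] y) hCS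
    have hz' : Tendsto (fun n => d z (f^[n + 1] y)) atTop (nhds 0) :=
      (tendsto_add_atTop_iff_nat 1).mpr hz
    -- fixed point
    have hfix : f z = z := by
      have hbb : ∀ᶠ n in atTop,
          d z (f z) ≤ S * d z (f^[n + 1] y) + S * d z (f^[n] y) := by
        filter_upwards [hz.eventually_lt_const (show (0:ℝ≥0∞) < ⊤ by simp)] with n hn
        have hn' : d (f^[n] y) z < ⊤ := by rw [hsymm]; exact hn
        have hc := hf (f^[n] y) z hn'
        rw [← Function.iterate_succ_apply' f n] at hc
        have hc2 : d (f^[n + 1] y) (f z) ≤ d z (f^[n] y) := by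
          refine hc.trans ?_
          have h1 : φ (d (f^[n] y) z).toReal ≤ (d z (f^[n] y)).toReal / s := by
            rw [hsymm (f^[n] y) z]
            exact hφ_le _ ENNReal.toReal_nonneg
          calc ENNReal.ofReal (φ (d (f^[n] y) z).toReal)
              ≤ ENNReal.ofReal ((d z (f^[n] y)).toReal / s) := ENNReal.ofReal_le_ofReal h1
            _ ≤ ENNReal.ofReal (d z (f^[n] y)).toReal := by
                apply ENNReal.ofReal_le_ofReal
                exact div_le_self ENNReal.toReal_nonneg hs
            _ = d z (f^[n] y) := ENNReal.ofReal_toReal hn.ne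
        calc d z (f z)
            ≤ S * (d z (f^[n + 1] y) + d (f^[n + 1] y) (f z)) := htri _ _ _
          _ ≤ S * (d z (f^[n + 1] y) + d z (f^[n] y)) := by gcongr
          _ = S * d z (f^[n + 1] y) + S * d z (f^[n] y) := mul_add _ _ _
      have hlim : Tendsto (fun n => S * d z (f^[n + 1] y) + S * d z (f^[n] y))
          atTop (nhds 0) := by
        have h1 : Tendsto (fun n => S * d z (f^[n + 1] y)) atTop (nhds (S * 0)) :=
          ENNReal.Tendsto.const_mul hz' (Or.inr hStop)
        have h2 : Tendsto (fun n => S * d z (f^[n] y)) atTop (nhds (S * 0)) :=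
          ENNReal.Tendsto.const_mul hz (Or.inr hStop)
        rw [mul_zero] at h1 h2
        simpa using h1.add h2
      have h0 : d z (f z) ≤ 0 := ge_of_tendsto hlim hbb
      exact ((heq z (f z)).mp (le_antisymm h0 zero_le)).symm
    refine ⟨z, hfix, ?_⟩
    have hkey : (fun n => d z (f^[n + k₀] x)) = fun n => d z (f^[n] y) := by
      funext n
      rw [Function.iterate_add_apply, hydef]
    exact (tendsto_add_atTop_iff_nat k₀).mp (by rw [hkey]; exact hz)
end
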